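/- arXiv:math/0503742 — 7 statements merged into one kernel-verified Lean document; each statement's English description precedes it below -/
import Mathlib

section
/- Assume (A2) and (D2) and that σ₂(S^{d-1}) > 0. Then the layered stable Lévy measure ν has the following moment behavior outside the unit ball: for every p ∈ (0, β), ∫_{{z : ‖z‖ > 1}} ‖z‖^p ν(dz) < ∞, while for every p ≥ β, ∫_{{z : ‖z‖ > 1}} ‖z‖^p ν(dz) = ∞. (Lévy-measure form of Proposition 2.3 on moments of layered stable distributions.) -/
open MeasureTheory Set Filter
open scoped ENNReal Topology

/-!
Write the tail moment of `ν` in polar coordinates as `∫ σ(dξ) ∫_1^∞ r^p q(r, ξ) dr`.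
For `p < β`, (D2) dominates the inner integrand by `C₂(ξ) r^{p-β-1}`, whose radial integral is
finite. For `p ≥ β`, (A2) gives `r^p q(r, ξ) ≥ (c₂(ξ)/2) r⁻¹` for large `r` whenever `c₂(ξ) > 0`, so
the inner integral diverges on `{c₂ > 0}`, a set of positive `σ`-measure because `∫ c₂ dσ > 0`.
-/

/-- `ENNReal.ofReal` truncates, so only the positive part of `r ^ p * f r` is integrated. -/
noncomputable def tailMoment (p : ℝ) (f : ℝ → ℝ) : ℝ≥0∞ :=
  ∫⁻ r in Ioi 1, ENNReal.ofReal (r ^ p * f r)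

lemma tailMoment_le_of_le_rpow {f : ℝ → ℝ} {C β : ℝ} (p : ℝ)
    (hf : ∀ r : ℝ, 1 ≤ r → f r ≤ C * r ^ (-β - 1)) :
    tailMoment p f ≤ ENNReal.ofReal C * ∫⁻ r in Ioi 1, ENNReal.ofReal (r ^ (p - β - 1)) := by
  rw [← lintegral_const_mul' _ _ ENNReal.ofReal_ne_top]
  refine setLIntegral_mono' measurableSet_Ioi fun r hr => ?_
  have hr0 : 0 < r := zero_lt_one.trans hr
  rw [← ENNReal.ofReal_mul' (Real.rpow_nonneg hr0.le _)]
  refine ENNReal.ofReal_le_ofReal ?_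
  calc r ^ p * f r ≤ r ^ p * (C * r ^ (-β - 1)) :=
        mul_le_mul_of_nonneg_left (hf r (le_of_lt hr)) (Real.rpow_nonneg hr0.le p)
    _ = C * r ^ (p - β - 1) := by
        rw [mul_left_comm, ← Real.rpow_add hr0]
        ring_nf

lemma lintegral_tailMoment_lt_top {X : Type*} [MeasurableSpace X] {σ : Measure X}
    {q : ℝ → X → ℝ} {C : X → ℝ} {β p : ℝ} (hC : Integrable C σ)
    (hq : ∀ ξ, ∀ r : ℝ, 1 ≤ r → q r ξ ≤ C ξ * r ^ (-β - 1)) (hp : p < β) :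
    ∫⁻ ξ, tailMoment p (q · ξ) ∂σ < ⊤ := by
  set K := ∫⁻ r in Ioi (1 : ℝ), ENNReal.ofReal (r ^ (p - β - 1))
  have hK : K < ⊤ := (integrableOn_Ioi_rpow_of_lt (by linarith) zero_lt_one).lintegral_lt_top
  calc ∫⁻ ξ, tailMoment p (q · ξ) ∂σ ≤ ∫⁻ ξ, ENNReal.ofReal (C ξ) * K ∂σ :=
        lintegral_mono fun ξ => tailMoment_le_of_le_rpow p (hq ξ)
    _ = (∫⁻ ξ, ENNReal.ofReal (C ξ) ∂σ) * K :=
        lintegral_mul_const'' K hC.aemeasurable.ennreal_ofReal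
    _ < ⊤ := ENNReal.mul_lt_top hC.lintegral_lt_top hK

lemma lintegral_Ioi_ofReal_inv_eq_top {a : ℝ} (ha : 0 ≤ a) :
    ∫⁻ r in Ioi a, ENNReal.ofReal r⁻¹ = ⊤ := by
  by_contra h
  refine not_integrableOn_Ioi_inv ((lintegral_ofReal_ne_top_iff_integrable
    measurable_inv.aestronglyMeasurable ?_).mp h)
  filter_upwards [ae_restrict_mem measurableSet_Ioi] with r hr
  exact inv_nonneg.mpr (ha.trans hr.le)

lemma tailMoment_eq_top_of_tendsto {f : ℝ → ℝ} {β p c : ℝ}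
    (hf : Tendsto (fun r : ℝ => r ^ (β + 1) * f r) atTop (𝓝 c)) (hc : 0 < c) (hp : β ≤ p) :
    tailMoment p f = ⊤ := by
  obtain ⟨R, hR⟩ := eventually_atTop.mp
    ((hf.eventually (eventually_gt_nhds (half_lt_self hc))).and (eventually_ge_atTop 1))
  have hR1 : 1 ≤ R := (hR R le_rfl).2
  have hminorant : ∀ r ∈ Ioi R, c / 2 * r⁻¹ ≤ r ^ p * f r := by
    intro r hr
    have hr1 : 1 ≤ r := hR1.trans hr.le
    have hr0 : 0 < r := zero_lt_one.trans_le hr1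
    have hlt : c / 2 < r ^ (β + 1) * f r := (hR r hr.le).1
    have hfr : 0 < f r :=
      pos_of_mul_pos_right ((half_pos hc).trans hlt) (Real.rpow_pos_of_pos hr0 _).le
    calc c / 2 * r⁻¹ ≤ r ^ (β + 1) * f r * r⁻¹ :=
          mul_le_mul_of_nonneg_right hlt.le (inv_nonneg.mpr hr0.le)
      _ = r ^ β * f r := by
          rw [Real.rpow_add_one hr0.ne']
          field_simp
      _ ≤ r ^ p * f r :=
          mul_le_mul_of_nonneg_right (Real.rpow_le_rpow_of_exponent_le hr1 hp) hfr.le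
  refine eq_top_iff.mpr ?_
  calc ⊤ = ENNReal.ofReal (c / 2) * ∫⁻ r in Ioi R, ENNReal.ofReal r⁻¹ := by
        rw [lintegral_Ioi_ofReal_inv_eq_top (zero_le_one.trans hR1),
          ENNReal.mul_top (ENNReal.ofReal_pos.mpr (half_pos hc)).ne']
    _ = ∫⁻ r in Ioi R, ENNReal.ofReal (c / 2 * r⁻¹) := by
        rw [← lintegral_const_mul' _ _ ENNReal.ofReal_ne_top]
        simp only [ENNReal.ofReal_mul (half_pos hc).le]
    _ ≤ ∫⁻ r in Ioi R, ENNReal.ofReal (r ^ p * f r) :=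
        setLIntegral_mono' measurableSet_Ioi fun r hr => ENNReal.ofReal_le_ofReal (hminorant r hr)
    _ ≤ tailMoment p f := lintegral_mono_set (Ioi_subset_Ioi hR1)

lemma lintegral_eq_top_of_integral_pos {X : Type*} [MeasurableSpace X] {μ : Measure X}
    {c : X → ℝ} {F : X → ℝ≥0∞} (hc : 0 < ∫ x, c x ∂μ) (hF : ∀ x, 0 < c x → F x = ⊤) :
    ∫⁻ x, F x ∂μ = ⊤ := by
  have hpos : μ {x | 0 < c x} ≠ 0 := by
    intro h0
    have hnonpos : c ≤ᵐ[μ] 0 := by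
      filter_upwards [measure_eq_zero_iff_ae_notMem.mp h0] with x hx using not_lt.mp hx
    exact (integral_nonpos_of_ae hnonpos).not_gt hc
  have hmeas : NullMeasurableSet {x | 0 < c x} μ :=
    nullMeasurableSet_lt aemeasurable_const (Integrable.of_integral_ne_zero hc.ne').aemeasurable
  refine eq_top_iff.mpr ?_
  calc ⊤ = ∫⁻ x, {x | 0 < c x}.indicator (fun _ => ⊤) x ∂μ := by
        rw [lintegral_indicator_const₀ hmeas, ENNReal.top_mul hpos]
    _ ≤ ∫⁻ x, F x ∂μ := lintegral_mono fun x => indicator_le (fun x hx => (hF x hx).ge) x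

theorem layered_stable_moments_general
    (d : ℕ)
    (σ : Measure (Metric.sphere (0 : EuclideanSpace ℝ (Fin d)) 1))
    (β : ℝ)
    (q : ℝ → Metric.sphere (0 : EuclideanSpace ℝ (Fin d)) 1 → ℝ)
    (c₂ C₂ : Metric.sphere (0 : EuclideanSpace ℝ (Fin d)) 1 → ℝ)
    (hA2 : ∀ ξ, Tendsto (fun r : ℝ => r ^ (β + 1) * q r ξ) atTop (nhds (c₂ ξ)))
    (hC₂_int : Integrable C₂ σ)
    (hD2 : ∀ ξ, ∀ r : ℝ, 1 ≤ r → q r ξ ≤ C₂ ξ * r ^ (-β - 1))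
    (hσ₂_pos : 0 < ∫ ξ, c₂ ξ ∂σ) :
    (∀ p : ℝ, 0 < p → p < β →
      ∫⁻ ξ, (∫⁻ r in Ioi (1 : ℝ), ENNReal.ofReal (r ^ p * q r ξ)) ∂σ < ⊤) ∧
    (∀ p : ℝ, β ≤ p →
      ∫⁻ ξ, (∫⁻ r in Ioi (1 : ℝ), ENNReal.ofReal (r ^ p * q r ξ)) ∂σ = ⊤) :=
  ⟨fun _ _ hp => lintegral_tailMoment_lt_top hC₂_int hD2 hp,
    fun _ hp => lintegral_eq_top_of_integral_pos hσ₂_pos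
      fun ξ hξ => tailMoment_eq_top_of_tendsto (hA2 ξ) hξ hp⟩

/-- Proposition 2.3 (moments), Lévy-measure form: under (A2), (D2) and
`σ₂(S^{d-1}) > 0`, the layered stable Lévy measure integrates `‖z‖^p` outside the
unit ball iff `p < β`. -/
theorem layered_stable_moments
    (d : ℕ) (hd : 1 ≤ d)
    (σ : Measure (Metric.sphere (0 : EuclideanSpace ℝ (Fin d)) 1))
    [IsFiniteMeasure σ]
    (β : ℝ) (hβ : 0 < β)
    (q : ℝ → Metric.sphere (0 : EuclideanSpace ℝ (Fin d)) 1 → ℝ)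
    (hq_meas : Measurable (Function.uncurry q))
    (hq_pos : ∀ r : ℝ, 0 < r → ∀ ξ, 0 < q r ξ)
    (c₂ C₂ : Metric.sphere (0 : EuclideanSpace ℝ (Fin d)) 1 → ℝ)
    (hc₂_nonneg : ∀ ξ, 0 ≤ c₂ ξ) (hc₂_int : Integrable c₂ σ)
    (hA2 : ∀ ξ, Tendsto (fun r : ℝ => r ^ (β + 1) * q r ξ) atTop (nhds (c₂ ξ)))
    (hC₂_nonneg : ∀ ξ, 0 ≤ C₂ ξ) (hC₂_int : Integrable C₂ σ)
    (hD2 : ∀ ξ, ∀ r : ℝ, 1 ≤ r → q r ξ ≤ C₂ ξ * r ^ (-β - 1))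
    (hσ₂_pos : 0 < ∫ ξ, c₂ ξ ∂σ) :
    (∀ p : ℝ, 0 < p → p < β →
      ∫⁻ ξ, (∫⁻ r in Ioi (1 : ℝ), ENNReal.ofReal (r ^ p * q r ξ)) ∂σ < ⊤) ∧
    (∀ p : ℝ, β ≤ p →
      ∫⁻ ξ, (∫⁻ r in Ioi (1 : ℝ), ENNReal.ofReal (r ^ p * q r ξ)) ∂σ = ⊤) :=
  layered_stable_moments_general d σ β q c₂ C₂ hA2 hC₂_int hD2 hσ₂_pos
end

section
/- Assume (A1), (D1) and (D2). Then the rescaled layered stable Lévy measures h·(T_{h^{-1/α}}ν) converge vaguely, as h → 0⁺, to the α-stable Lévy measure ν^α_{σ₁}: for every bounded continuous function f : ℝ^d → ℝ that vanishes on a neighborhood of the origin, lim_{h→0⁺} h ∫_{S^{d-1}} ∫_0^∞ f(h^{-1/α} r ξ) q(r,ξ) dr σ(dξ) = ∫_{S^{d-1}} c₁(ξ) ∫_0^∞ f(rξ) r^{-α-1} dr σ(dξ). (Convergence of Lévy measures in the proof of Theorem 3.1 on the short time behavior of layered stable processes.) -/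
/-!
Substituting `r = u s` with `u = h^{1/α}` turns the rescaled integral into
`∫ f(sξ) u^{α+1} q(us, ξ) ds`. As `u → 0⁺` the density
`u^{α+1} q(us, ξ) = (us)^{α+1} q(us, ξ) s^{-α-1}` tends to `c₁(ξ) s^{-α-1}` by (A1), and since `f` vanishes near the origin only `s ≥ ε` matters,
where (D1) and (D2) bound the density uniformly in `u ≤ 1` by `(C₁ + C₂)(s^{-α-1} + s^{-β-1})`.
Dominated convergence in `s` and then in `ξ` gives the limit.
-/

open MeasureTheory Set Filter Topology

namespace LayeredStable

/-- The density in `s` of the measure `u^α · T_{u⁻¹}(p(r) dr)`. -/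
noncomputable def rescaledDensity (α : ℝ) (p : ℝ → ℝ) (u s : ℝ) : ℝ := u ^ (α + 1) * p (u * s)

noncomputable def tailWeight (α β ε : ℝ) : ℝ → ℝ :=
  (Ioi ε).indicator fun s => s ^ (-α - 1) + s ^ (-β - 1)

lemma tailWeight_nonneg (α β : ℝ) {ε : ℝ} (hε : 0 ≤ ε) (s : ℝ) : 0 ≤ tailWeight α β ε s :=
  indicator_nonneg (fun t ht => by have : 0 < t := hε.trans_lt ht; positivity) s

lemma integrable_tailWeight {α β ε : ℝ} (hα : 0 < α) (hβ : 0 < β) (hε : 0 < ε) :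
    Integrable (tailWeight α β ε) :=
  ((integrableOn_Ioi_rpow_of_lt (by linarith) hε).add
    (integrableOn_Ioi_rpow_of_lt (by linarith) hε)).integrable_indicator measurableSet_Ioi

lemma rpow_le_one_add_rpow_neg {u s : ℝ} (γ : ℝ) (hu : 0 < u) (hu1 : u ≤ 1) (hus : 1 ≤ u * s) :
    u ^ γ ≤ 1 + s ^ (-γ) := by
  have hs : 0 < s := pos_of_mul_pos_right (zero_lt_one.trans_le hus) hu.le
  rcases le_total 0 γ with hγ | hγ
  · exact (Real.rpow_le_one hu.le hu1 hγ).trans (le_add_of_nonneg_right (by positivity))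
  · have hsu : s⁻¹ ≤ u := by rw [inv_le_iff_one_le_mul₀ hs]; linarith
    calc u ^ γ ≤ s⁻¹ ^ γ := Real.rpow_le_rpow_of_nonpos (inv_pos.2 hs) hsu hγ
      _ = s ^ (-γ) := by rw [Real.inv_rpow hs.le, Real.rpow_neg hs.le]
      _ ≤ 1 + s ^ (-γ) := le_add_of_nonneg_left zero_le_one

lemma tendsto_mul_const_nhdsGT_zero {s : ℝ} (hs : 0 < s) :
    Tendsto (· * s) (𝓝[>] (0 : ℝ)) (𝓝[>] 0) := by
  have hmaps : MapsTo (· * s) (Ioi (0 : ℝ)) (Ioi 0) := fun u hu => mul_pos hu hs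
  simpa using ((continuous_mul_const s).continuousWithinAt (x := 0)).tendsto_nhdsWithin hmaps

lemma tendsto_rpow_nhdsGT_zero {a : ℝ} (ha : 0 < a) :
    Tendsto (· ^ a) (𝓝[>] (0 : ℝ)) (𝓝[>] 0) := by
  have hmaps : MapsTo (· ^ a) (Ioi (0 : ℝ)) (Ioi 0) := fun u hu => Real.rpow_pos_of_pos hu a
  simpa [Real.zero_rpow ha.ne'] using
    (Real.continuousAt_rpow_const 0 a (Or.inr ha.le)).continuousWithinAt.tendsto_nhdsWithin hmaps

section Density

variable {α β C₁ C₂ : ℝ} {p : ℝ → ℝ}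

lemma rescaledDensity_le (hC₁ : 0 ≤ C₁) (hC₂ : 0 ≤ C₂)
    (hD1 : ∀ r, 0 < r → r ≤ 1 → p r ≤ C₁ * r ^ (-α - 1))
    (hD2 : ∀ r, 1 ≤ r → p r ≤ C₂ * r ^ (-β - 1))
    {u s : ℝ} (hu : 0 < u) (hu1 : u ≤ 1) (hs : 0 < s) :
    rescaledDensity α p u s ≤ (C₁ + C₂) * (s ^ (-α - 1) + s ^ (-β - 1)) := by
  have hsα : 0 ≤ s ^ (-α - 1) := by positivity
  have hsβ : 0 ≤ s ^ (-β - 1) := by positivity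
  rcases le_total (u * s) 1 with hsmall | hlarge
  · have hu_cancel : u ^ (α + 1) * u ^ (-α - 1) = 1 := by
      rw [← Real.rpow_add hu, show α + 1 + (-α - 1) = 0 by ring, Real.rpow_zero]
    calc rescaledDensity α p u s ≤ u ^ (α + 1) * (C₁ * (u * s) ^ (-α - 1)) :=
          mul_le_mul_of_nonneg_left (hD1 _ (mul_pos hu hs) hsmall) (by positivity)
      _ = C₁ * s ^ (-α - 1) := by
          rw [Real.mul_rpow hu.le hs.le]; linear_combination (C₁ * s ^ (-α - 1)) * hu_cancel
      _ ≤ (C₁ + C₂) * (s ^ (-α - 1) + s ^ (-β - 1)) := by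
          nlinarith [mul_nonneg hC₁ hsβ, mul_nonneg hC₂ hsα, mul_nonneg hC₂ hsβ]
  · have hu_pow : u ^ (α + 1) * u ^ (-β - 1) = u ^ (α - β) := by
      rw [← Real.rpow_add hu]; ring_nf
    have hs_pow : s ^ (-(α - β)) * s ^ (-β - 1) = s ^ (-α - 1) := by
      rw [← Real.rpow_add hs]; ring_nf
    calc rescaledDensity α p u s ≤ u ^ (α + 1) * (C₂ * (u * s) ^ (-β - 1)) :=
          mul_le_mul_of_nonneg_left (hD2 _ hlarge) (by positivity)
      _ = C₂ * (u ^ (α - β) * s ^ (-β - 1)) := by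
          rw [Real.mul_rpow hu.le hs.le, ← hu_pow]; ring
      _ ≤ C₂ * ((1 + s ^ (-(α - β))) * s ^ (-β - 1)) := by
          gcongr; exact rpow_le_one_add_rpow_neg _ hu hu1 hlarge
      _ = C₂ * (s ^ (-α - 1) + s ^ (-β - 1)) := by rw [add_mul, hs_pow]; ring
      _ ≤ (C₁ + C₂) * (s ^ (-α - 1) + s ^ (-β - 1)) := by
          nlinarith [mul_nonneg hC₁ hsβ, mul_nonneg hC₁ hsα]

lemma tendsto_rescaledDensity {c : ℝ}
    (hA1 : Tendsto (fun r => r ^ (α + 1) * p r) (𝓝[>] 0) (𝓝 c)) {s : ℝ} (hs : 0 < s) :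
    Tendsto (fun u => rescaledDensity α p u s) (𝓝[>] 0) (𝓝 (c * s ^ (-α - 1))) := by
  refine ((hA1.comp (tendsto_mul_const_nhdsGT_zero hs)).mul_const _).congr' ?_
  filter_upwards [self_mem_nhdsWithin] with u (hu : 0 < u)
  have hs_cancel : s ^ (α + 1) * s ^ (-α - 1) = 1 := by
    rw [← Real.rpow_add hs, show α + 1 + (-α - 1) = 0 by ring, Real.rpow_zero]
  simp only [Function.comp_apply, rescaledDensity, Real.mul_rpow hu.le hs.le]
  linear_combination (u ^ (α + 1) * p (u * s)) * hs_cancel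

lemma integral_comp_inv_mul_eq_integral_mul_rescaledDensity (g : ℝ → ℝ) {u : ℝ} (hu : 0 < u) :
    u ^ α * ∫ r in Ioi 0, g (u⁻¹ * r) * p r = ∫ s in Ioi 0, g s * rescaledDensity α p u s := by
  have hsubst := integral_comp_mul_left_Ioi (fun r => g (u⁻¹ * r) * p r) 0 hu
  simp only [mul_zero, inv_mul_cancel_left₀ hu.ne', smul_eq_mul] at hsubst
  simp only [rescaledDensity, mul_left_comm (g _), integral_const_mul, hsubst,
    Real.rpow_add hu, Real.rpow_one]
  field_simp

variable {g : ℝ → ℝ} {M ε : ℝ}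

lemma norm_mul_rescaledDensity_le (hε : 0 ≤ ε) (hgM : ∀ s, |g s| ≤ M)
    (hg0 : ∀ s, 0 < s → s ≤ ε → g s = 0) (hp_pos : ∀ r, 0 < r → 0 < p r)
    (hC₁ : 0 ≤ C₁) (hC₂ : 0 ≤ C₂)
    (hD1 : ∀ r, 0 < r → r ≤ 1 → p r ≤ C₁ * r ^ (-α - 1))
    (hD2 : ∀ r, 1 ≤ r → p r ≤ C₂ * r ^ (-β - 1))
    {u s : ℝ} (hu : 0 < u) (hu1 : u ≤ 1) (hs : 0 < s) :
    ‖g s * rescaledDensity α p u s‖ ≤ M * (C₁ + C₂) * tailWeight α β ε s := by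
  have hM : 0 ≤ M := (abs_nonneg _).trans (hgM 0)
  by_cases hsε : s ≤ ε
  · rw [hg0 s hs hsε, zero_mul, norm_zero]
    exact mul_nonneg (by positivity) (tailWeight_nonneg α β hε s)
  · have hρ : 0 < rescaledDensity α p u s :=
      mul_pos (by positivity) (hp_pos _ (mul_pos hu hs))
    rw [tailWeight, indicator_of_mem (show s ∈ Ioi ε from not_le.1 hsε), norm_mul,
      Real.norm_eq_abs, Real.norm_eq_abs, abs_of_pos hρ, mul_assoc]
    exact mul_le_mul (hgM s) (rescaledDensity_le hC₁ hC₂ hD1 hD2 hu hu1 hs) hρ.le hM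

lemma norm_integral_mul_rescaledDensity_le (hα : 0 < α) (hβ : 0 < β) (hε : 0 < ε)
    (hgM : ∀ s, |g s| ≤ M) (hg0 : ∀ s, 0 < s → s ≤ ε → g s = 0)
    (hp_pos : ∀ r, 0 < r → 0 < p r) (hC₁ : 0 ≤ C₁) (hC₂ : 0 ≤ C₂)
    (hD1 : ∀ r, 0 < r → r ≤ 1 → p r ≤ C₁ * r ^ (-α - 1))
    (hD2 : ∀ r, 1 ≤ r → p r ≤ C₂ * r ^ (-β - 1))
    {u : ℝ} (hu : 0 < u) (hu1 : u ≤ 1) :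
    ‖∫ s in Ioi 0, g s * rescaledDensity α p u s‖
      ≤ M * (C₁ + C₂) * ∫ s in Ioi 0, tailWeight α β ε s := by
  rw [← integral_const_mul]
  exact norm_integral_le_of_norm_le ((integrable_tailWeight hα hβ hε).const_mul _).restrict
    ((ae_restrict_iff' measurableSet_Ioi).2 <| ae_of_all _ fun s hs =>
      norm_mul_rescaledDensity_le hε.le hgM hg0 hp_pos hC₁ hC₂ hD1 hD2 hu hu1 hs)

lemma tendsto_integral_mul_rescaledDensity {c : ℝ} (hα : 0 < α) (hβ : 0 < β) (hε : 0 < ε)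
    (hg : Measurable g) (hgM : ∀ s, |g s| ≤ M) (hg0 : ∀ s, 0 < s → s ≤ ε → g s = 0)
    (hp : Measurable p) (hp_pos : ∀ r, 0 < r → 0 < p r)
    (hA1 : Tendsto (fun r => r ^ (α + 1) * p r) (𝓝[>] 0) (𝓝 c))
    (hC₁ : 0 ≤ C₁) (hC₂ : 0 ≤ C₂)
    (hD1 : ∀ r, 0 < r → r ≤ 1 → p r ≤ C₁ * r ^ (-α - 1))
    (hD2 : ∀ r, 1 ≤ r → p r ≤ C₂ * r ^ (-β - 1)) :
    Tendsto (fun u => ∫ s in Ioi 0, g s * rescaledDensity α p u s) (𝓝[>] 0)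
      (𝓝 (c * ∫ s in Ioi 0, g s * s ^ (-α - 1))) := by
  rw [← integral_const_mul]
  refine tendsto_integral_filter_of_dominated_convergence
    (fun s => M * (C₁ + C₂) * tailWeight α β ε s) ?_ ?_
    ((integrable_tailWeight hα hβ hε).const_mul _).restrict
    ((ae_restrict_iff' measurableSet_Ioi).2 <| ae_of_all _ fun s hs => ?_)
  · refine Eventually.of_forall fun u => Measurable.aestronglyMeasurable ?_
    unfold rescaledDensity
    fun_prop
  · filter_upwards [Ioc_mem_nhdsGT zero_lt_one] with u hu
    exact (ae_restrict_iff' measurableSet_Ioi).2 <| ae_of_all _ fun s hs =>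
      norm_mul_rescaledDensity_le hε.le hgM hg0 hp_pos hC₁ hC₂ hD1 hD2 hu.1 hu.2 hs
  · rw [mul_left_comm]
    exact (tendsto_rescaledDensity hA1 hs).const_mul (g s)

end Density

variable {S : Type*} [MeasurableSpace S] {σ : Measure S} {α β M ε : ℝ}
  {g : S → ℝ → ℝ} {q : ℝ → S → ℝ} {c C₁ C₂ : S → ℝ}

lemma tendsto_integral_integral_mul_rescaledDensity (hα : 0 < α) (hβ : 0 < β) (hε : 0 < ε)
    (hg : Measurable (Function.uncurry g)) (hgM : ∀ ξ s, |g ξ s| ≤ M)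
    (hg0 : ∀ ξ s, 0 < s → s ≤ ε → g ξ s = 0)
    (hq : Measurable (Function.uncurry q)) (hq_pos : ∀ r : ℝ, 0 < r → ∀ ξ, 0 < q r ξ)
    (hA1 : ∀ ξ, Tendsto (fun r : ℝ => r ^ (α + 1) * q r ξ) (𝓝[>] 0) (𝓝 (c ξ)))
    (hC₁ : ∀ ξ, 0 ≤ C₁ ξ) (hC₁_int : Integrable C₁ σ)
    (hD1 : ∀ ξ, ∀ r : ℝ, 0 < r → r ≤ 1 → q r ξ ≤ C₁ ξ * r ^ (-α - 1))
    (hC₂ : ∀ ξ, 0 ≤ C₂ ξ) (hC₂_int : Integrable C₂ σ)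
    (hD2 : ∀ ξ, ∀ r : ℝ, 1 ≤ r → q r ξ ≤ C₂ ξ * r ^ (-β - 1)) :
    Tendsto (fun u => ∫ ξ, (∫ s in Ioi 0, g ξ s * rescaledDensity α (q · ξ) u s) ∂σ) (𝓝[>] 0)
      (𝓝 (∫ ξ, c ξ * (∫ s in Ioi 0, g ξ s * s ^ (-α - 1)) ∂σ)) := by
  have hmeas : ∀ u,
      Measurable (Function.uncurry fun ξ s => g ξ s * rescaledDensity α (q · ξ) u s) := fun u =>
    hg.mul (measurable_const.mul (hq.comp ((measurable_snd.const_mul u).prodMk measurable_fst)))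
  refine tendsto_integral_filter_of_dominated_convergence
    (fun ξ => M * (C₁ ξ + C₂ ξ) * ∫ s in Ioi 0, tailWeight α β ε s)
    (Eventually.of_forall fun u =>
      (hmeas u).stronglyMeasurable.integral_prod_right.aestronglyMeasurable) ?_
    (((hC₁_int.add hC₂_int).const_mul M).mul_const _) (ae_of_all _ fun ξ => ?_)
  · filter_upwards [Ioc_mem_nhdsGT zero_lt_one] with u hu
    exact ae_of_all _ fun ξ => norm_integral_mul_rescaledDensity_le hα hβ hε (hgM ξ) (hg0 ξ)
      (fun r hr => hq_pos r hr ξ) (hC₁ ξ) (hC₂ ξ) (hD1 ξ) (hD2 ξ) hu.1 hu.2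
  · exact tendsto_integral_mul_rescaledDensity hα hβ hε (hg.comp measurable_prodMk_left)
      (hgM ξ) (hg0 ξ) (hq.comp (measurable_id.prodMk measurable_const))
      (fun r hr => hq_pos r hr ξ) (hA1 ξ) (hC₁ ξ) (hC₂ ξ) (hD1 ξ) (hD2 ξ)

end LayeredStable

open LayeredStable

theorem layered_stable_short_time_levy_measure_convergence_general
    (d : ℕ)
    (σ : Measure (Metric.sphere (0 : EuclideanSpace ℝ (Fin d)) 1))
    (α β : ℝ) (hα0 : 0 < α) (hβ : 0 < β)
    (q : ℝ → Metric.sphere (0 : EuclideanSpace ℝ (Fin d)) 1 → ℝ)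
    (hq_meas : Measurable (Function.uncurry q))
    (hq_pos : ∀ r : ℝ, 0 < r → ∀ ξ, 0 < q r ξ)
    (c₁ C₁ C₂ : Metric.sphere (0 : EuclideanSpace ℝ (Fin d)) 1 → ℝ)
    (hA1 : ∀ ξ, Tendsto (fun r : ℝ => r ^ (α + 1) * q r ξ)
      (nhdsWithin 0 (Ioi 0)) (nhds (c₁ ξ)))
    (hC₁_nonneg : ∀ ξ, 0 ≤ C₁ ξ) (hC₁_int : Integrable C₁ σ)
    (hD1 : ∀ ξ, ∀ r : ℝ, 0 < r → r ≤ 1 → q r ξ ≤ C₁ ξ * r ^ (-α - 1))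
    (hC₂_nonneg : ∀ ξ, 0 ≤ C₂ ξ) (hC₂_int : Integrable C₂ σ)
    (hD2 : ∀ ξ, ∀ r : ℝ, 1 ≤ r → q r ξ ≤ C₂ ξ * r ^ (-β - 1))
    (f : EuclideanSpace ℝ (Fin d) → ℝ)
    (hf_cont : Continuous f)
    (hf_bdd : ∃ C : ℝ, ∀ x, |f x| ≤ C)
    (hf_van : ∃ ε : ℝ, 0 < ε ∧ ∀ x : EuclideanSpace ℝ (Fin d), ‖x‖ ≤ ε → f x = 0) :
    Tendsto
      (fun h : ℝ => h * ∫ ξ, (∫ r in Ioi (0 : ℝ),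
        f ((h ^ (-(1 / α)) * r) • (ξ : EuclideanSpace ℝ (Fin d))) * q r ξ) ∂σ)
      (nhdsWithin 0 (Ioi 0))
      (nhds (∫ ξ, c₁ ξ * (∫ r in Ioi (0 : ℝ),
        f (r • (ξ : EuclideanSpace ℝ (Fin d))) * r ^ (-α - 1)) ∂σ)) := by
  obtain ⟨M, hM⟩ := hf_bdd
  obtain ⟨ε, hε, hf0⟩ := hf_van
  have hf0_ray : ∀ (ξ : Metric.sphere (0 : EuclideanSpace ℝ (Fin d)) 1) (s : ℝ),
      0 < s → s ≤ ε → f (s • (ξ : EuclideanSpace ℝ (Fin d))) = 0 := fun ξ s hs hsε =>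
    hf0 _ (by rwa [norm_smul, norm_eq_of_mem_sphere ξ, mul_one, Real.norm_of_nonneg hs.le])
  have hlim := tendsto_integral_integral_mul_rescaledDensity (σ := σ)
    (g := fun ξ s => f (s • (ξ : EuclideanSpace ℝ (Fin d)))) hα0 hβ hε
    (hf_cont.comp (continuous_snd.smul (continuous_subtype_val.comp continuous_fst))).measurable
    (fun _ _ => hM _) hf0_ray hq_meas hq_pos hA1 hC₁_nonneg hC₁_int hD1 hC₂_nonneg hC₂_int hD2
  refine (hlim.comp (tendsto_rpow_nhdsGT_zero (one_div_pos.2 hα0))).congr' ?_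
  filter_upwards [self_mem_nhdsWithin] with h (hh : 0 < h)
  have hu : 0 < h ^ (1 / α) := by positivity
  have hh_eq : (h ^ (1 / α)) ^ α = h := by rw [one_div, Real.rpow_inv_rpow hh.le hα0.ne']
  rw [Function.comp_apply, ← integral_const_mul]
  refine integral_congr_ae (ae_of_all _ fun ξ => ?_)
  simpa only [hh_eq, Real.rpow_neg hh.le] using
    (integral_comp_inv_mul_eq_integral_mul_rescaledDensity (α := α) (p := (q · ξ))
      (fun s => f (s • (ξ : EuclideanSpace ℝ (Fin d)))) hu).symm

/-- Convergence of Lévy measures in the proof of Theorem 3.1 (short time behavior):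
under (A1), (D1), (D2), the rescaled layered stable Lévy measures
`h · T_{h^{-1/α}} ν` converge vaguely, as `h → 0⁺`, to the `α`-stable Lévy measure
`ν^α_{σ₁}`. -/
theorem layered_stable_short_time_levy_measure_convergence
    (d : ℕ) (hd : 1 ≤ d)
    (σ : Measure (Metric.sphere (0 : EuclideanSpace ℝ (Fin d)) 1))
    [IsFiniteMeasure σ]
    (α β : ℝ) (hα0 : 0 < α) (hα2 : α < 2) (hβ : 0 < β)
    (q : ℝ → Metric.sphere (0 : EuclideanSpace ℝ (Fin d)) 1 → ℝ)
    (hq_meas : Measurable (Function.uncurry q))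
    (hq_pos : ∀ r : ℝ, 0 < r → ∀ ξ, 0 < q r ξ)
    (c₁ C₁ C₂ : Metric.sphere (0 : EuclideanSpace ℝ (Fin d)) 1 → ℝ)
    (hc₁_nonneg : ∀ ξ, 0 ≤ c₁ ξ) (hc₁_int : Integrable c₁ σ)
    (hA1 : ∀ ξ, Tendsto (fun r : ℝ => r ^ (α + 1) * q r ξ)
      (nhdsWithin 0 (Ioi 0)) (nhds (c₁ ξ)))
    (hC₁_nonneg : ∀ ξ, 0 ≤ C₁ ξ) (hC₁_int : Integrable C₁ σ)
    (hD1 : ∀ ξ, ∀ r : ℝ, 0 < r → r ≤ 1 → q r ξ ≤ C₁ ξ * r ^ (-α - 1))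
    (hC₂_nonneg : ∀ ξ, 0 ≤ C₂ ξ) (hC₂_int : Integrable C₂ σ)
    (hD2 : ∀ ξ, ∀ r : ℝ, 1 ≤ r → q r ξ ≤ C₂ ξ * r ^ (-β - 1))
    (f : EuclideanSpace ℝ (Fin d) → ℝ)
    (hf_cont : Continuous f)
    (hf_bdd : ∃ C : ℝ, ∀ x, |f x| ≤ C)
    (hf_van : ∃ ε : ℝ, 0 < ε ∧ ∀ x : EuclideanSpace ℝ (Fin d), ‖x‖ ≤ ε → f x = 0) :
    Tendsto
      (fun h : ℝ => h * ∫ ξ, (∫ r in Ioi (0 : ℝ),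
        f ((h ^ (-(1 / α)) * r) • (ξ : EuclideanSpace ℝ (Fin d))) * q r ξ) ∂σ)
      (nhdsWithin 0 (Ioi 0))
      (nhds (∫ ξ, c₁ ξ * (∫ r in Ioi (0 : ℝ),
        f (r • (ξ : EuclideanSpace ℝ (Fin d))) * r ^ (-α - 1)) ∂σ)) :=
  layered_stable_short_time_levy_measure_convergence_general d σ α β hα0 hβ q hq_meas hq_pos c₁ C₁
    C₂ hA1 hC₁_nonneg hC₁_int hD1 hC₂_nonneg hC₂_int hD2 f hf_cont hf_bdd hf_van
end

section
/- Assume (A2), (D1) and (D2). Then the rescaled layered stable Lévy measures h·(T_{h^{-1/β}}ν) converge vaguely, as h → ∞, to the measure ν^β_{σ₂}: for every bounded continuous function f : ℝ^d → ℝ that vanishes on a neighborhood of the origin, lim_{h→∞} h ∫_{S^{d-1}} ∫_0^∞ f(h^{-1/β} r ξ) q(r,ξ) dr σ(dξ) = ∫_{S^{d-1}} c₂(ξ) ∫_0^∞ f(rξ) r^{-β-1} dr σ(dξ). (Convergence of Lévy measures in the proof of Theorem 3.2(i) on the long time behavior of layered stable processes; for β = 2 this also gives the vague limit discussed after Theorem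 3.2.) -/
open MeasureTheory Set Filter

/-- Convergence of Lévy measures in the proof of Theorem 3.2(i) (long time behavior):
under (A2), (D1), (D2), the rescaled layered stable Lévy measures `h · T_{h^{-1/β}} ν`
converge vaguely, as `h → ∞`, to the measure `ν^β_{σ₂}`. -/
theorem layered_stable_long_time_levy_measure_convergence
    (d : ℕ) (hd : 1 ≤ d)
    (σ : Measure (Metric.sphere (0 : EuclideanSpace ℝ (Fin d)) 1))
    [IsFiniteMeasure σ]
    (α β : ℝ) (hα0 : 0 < α) (hα2 : α < 2) (hβ : 0 < β)
    (q : ℝ → Metric.sphere (0 : EuclideanSpace ℝ (Fin d)) 1 → ℝ)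
    (hq_meas : Measurable (Function.uncurry q))
    (hq_pos : ∀ r : ℝ, 0 < r → ∀ ξ, 0 < q r ξ)
    (c₂ C₁ C₂ : Metric.sphere (0 : EuclideanSpace ℝ (Fin d)) 1 → ℝ)
    (hc₂_nonneg : ∀ ξ, 0 ≤ c₂ ξ) (hc₂_int : Integrable c₂ σ)
    (hA2 : ∀ ξ, Tendsto (fun r : ℝ => r ^ (β + 1) * q r ξ) atTop (nhds (c₂ ξ)))
    (hC₁_nonneg : ∀ ξ, 0 ≤ C₁ ξ) (hC₁_int : Integrable C₁ σ)
    (hD1 : ∀ ξ, ∀ r : ℝ, 0 < r → r ≤ 1 → q r ξ ≤ C₁ ξ * r ^ (-α - 1))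
    (hC₂_nonneg : ∀ ξ, 0 ≤ C₂ ξ) (hC₂_int : Integrable C₂ σ)
    (hD2 : ∀ ξ, ∀ r : ℝ, 1 ≤ r → q r ξ ≤ C₂ ξ * r ^ (-β - 1))
    (f : EuclideanSpace ℝ (Fin d) → ℝ)
    (hf_cont : Continuous f)
    (hf_bdd : ∃ C : ℝ, ∀ x, |f x| ≤ C)
    (hf_van : ∃ ε : ℝ, 0 < ε ∧ ∀ x : EuclideanSpace ℝ (Fin d), ‖x‖ ≤ ε → f x = 0) :
    Tendsto
      (fun h : ℝ => h * ∫ ξ, (∫ r in Ioi (0 : ℝ),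
        f ((h ^ (-(1 / β)) * r) • (ξ : EuclideanSpace ℝ (Fin d))) * q r ξ) ∂σ)
      atTop
      (nhds (∫ ξ, c₂ ξ * (∫ r in Ioi (0 : ℝ),
        f (r • (ξ : EuclideanSpace ℝ (Fin d))) * r ^ (-β - 1)) ∂σ)) := by
  classical
  obtain ⟨Cf, hCf⟩ := hf_bdd
  obtain ⟨ε, hε, hvan⟩ := hf_van
  have hCf0 : 0 ≤ Cf := le_trans (abs_nonneg _) (hCf 0)
  have hβ' : β ≠ 0 := ne_of_gt hβ
  have h1β : (0:ℝ) < 1 / β := by positivity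
  -- norm of s • ξ
  have hnorm : ∀ (s : ℝ) (ξ : (Metric.sphere (0 : EuclideanSpace ℝ (Fin d)) 1)), 0 ≤ s → ‖s • (ξ : EuclideanSpace ℝ (Fin d))‖ = s := by
    intro s ξ hs
    rw [norm_smul, norm_eq_of_mem_sphere ξ, mul_one, Real.norm_eq_abs, abs_of_nonneg hs]
  have hqsec : ∀ ξ : (Metric.sphere (0 : EuclideanSpace ℝ (Fin d)) 1), Measurable fun r => q r ξ := by
    intro ξ
    have : (fun r => q r ξ) = Function.uncurry q ∘ (fun r => (r, ξ)) := rfl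
    rw [this]
    exact hq_meas.comp (measurable_id.prodMk measurable_const)
  -- The rescaled integrand
  set Fn : ℝ → (Metric.sphere (0 : EuclideanSpace ℝ (Fin d)) 1) → ℝ → ℝ := fun h ξ s =>
    f (s • (ξ : EuclideanSpace ℝ (Fin d))) * s ^ (-β - 1) *
      ((h ^ (1/β) * s) ^ (β + 1) * q (h ^ (1/β) * s) ξ) with hFn
  -- the limit integrand (in s)
  have hvanish : ∀ (ξ : (Metric.sphere (0 : EuclideanSpace ℝ (Fin d)) 1)) (s : ℝ), s ∈ Ioi (0:ℝ) \ Ioi ε →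
      f (s • (ξ : EuclideanSpace ℝ (Fin d))) = 0 := by
    intro ξ s hs
    obtain ⟨hs0, hsε⟩ := hs
    have : s ≤ ε := not_lt.mp hsε
    exact hvan _ (by rw [hnorm s ξ (le_of_lt hs0)]; exact this)
  have hsub : Ioi ε ⊆ Ioi (0:ℝ) := Ioi_subset_Ioi hε.le
  -- Key change-of-variables rewrite
  have key : ∀ (ξ : (Metric.sphere (0 : EuclideanSpace ℝ (Fin d)) 1)) (h : ℝ), 0 < h →
      h * ∫ r in Ioi (0:ℝ),
        f ((h ^ (-(1 / β)) * r) • (ξ : EuclideanSpace ℝ (Fin d))) * q r ξ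
      = ∫ s in Ioi ε, Fn h ξ s := by
    intro ξ h hh
    have hb : (0:ℝ) < h ^ (-(1/β)) := Real.rpow_pos_of_pos hh _
    have hmul : ∀ r : ℝ, h ^ (1/β) * (h ^ (-(1/β)) * r) = r := by
      intro r
      rw [← mul_assoc, ← Real.rpow_add hh]
      simp
    set g : ℝ → ℝ := fun s =>
      f (s • (ξ : EuclideanSpace ℝ (Fin d))) * q (h ^ (1/β) * s) ξ with hg
    have e1 : (∫ r in Ioi (0:ℝ),
        f ((h ^ (-(1 / β)) * r) • (ξ : EuclideanSpace ℝ (Fin d))) * q r ξ)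
        = ∫ r in Ioi (0:ℝ), g (h ^ (-(1/β)) * r) := by
      refine setIntegral_congr_fun measurableSet_Ioi fun r _ => ?_
      simp only [hg]
      rw [hmul r]
    have e2 : (∫ r in Ioi (0:ℝ), g (h ^ (-(1/β)) * r))
        = (h ^ (-(1/β)))⁻¹ • ∫ s in Ioi (h ^ (-(1/β)) * 0), g s :=
      integral_comp_mul_left_Ioi g 0 hb
    have e3 : (h ^ (-(1/β)))⁻¹ = h ^ (1/β) := by
      rw [Real.rpow_neg hh.le, inv_inv]
    have e4 : (∫ s in Ioi (0:ℝ), g s) = ∫ s in Ioi ε, g s := by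
      refine setIntegral_eq_of_subset_of_forall_diff_eq_zero measurableSet_Ioi hsub
        fun s hs => ?_
      simp only [hg]
      rw [hvanish ξ s hs, zero_mul]
    rw [e1, e2, e3, mul_zero, e4, smul_eq_mul, ← mul_assoc, ← integral_const_mul]
    refine setIntegral_congr_fun measurableSet_Ioi fun s hs => ?_
    have hs0 : (0:ℝ) < s := hε.trans hs
    have hr0 : (0:ℝ) < h ^ (1/β) := Real.rpow_pos_of_pos hh _
    have A : (h ^ (1/β) * s) ^ (β + 1) = (h * h ^ (1/β)) * s ^ (β + 1) := by
      rw [Real.mul_rpow hr0.le hs0.le, ← Real.rpow_mul hh.le,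
        show (1/β) * (β + 1) = 1 + 1/β by field_simp,
        Real.rpow_add hh, Real.rpow_one]
    have B : s ^ (-β - 1) * s ^ (β + 1) = 1 := by
      rw [← Real.rpow_add hs0]
      norm_num
    simp only [hFn, hg]
    rw [A]
    linear_combination (-(f (s • (ξ : EuclideanSpace ℝ (Fin d))) * (h * h ^ (1/β)) *
      q (h ^ (1/β) * s) ξ)) * B
  -- Pointwise bound on the rescaled integrand
  have hbnd : ∀ (ξ : (Metric.sphere (0 : EuclideanSpace ℝ (Fin d)) 1)) (h s : ℝ), 1 ≤ h ^ (1/β) * s → ε < s →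
      ‖Fn h ξ s‖ ≤ Cf * C₂ ξ * s ^ (-β - 1) := by
    intro ξ h s hr hs
    have hs0 : (0:ℝ) < s := hε.trans hs
    have hr0 : (0:ℝ) < h ^ (1/β) * s := lt_of_lt_of_le one_pos hr
    have hQ0 : 0 ≤ (h ^ (1/β) * s) ^ (β + 1) * q (h ^ (1/β) * s) ξ :=
      mul_nonneg (Real.rpow_nonneg hr0.le _) (hq_pos _ hr0 ξ).le
    have hQle : (h ^ (1/β) * s) ^ (β + 1) * q (h ^ (1/β) * s) ξ ≤ C₂ ξ := by
      have := hD2 ξ _ hr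
      calc (h ^ (1/β) * s) ^ (β + 1) * q (h ^ (1/β) * s) ξ
          ≤ (h ^ (1/β) * s) ^ (β + 1) * (C₂ ξ * (h ^ (1/β) * s) ^ (-β - 1)) :=
            mul_le_mul_of_nonneg_left this (Real.rpow_nonneg hr0.le _)
        _ = C₂ ξ * ((h ^ (1/β) * s) ^ (β + 1) * (h ^ (1/β) * s) ^ (-β - 1)) := by ring
        _ = C₂ ξ := by rw [← Real.rpow_add hr0]; norm_num
    have hp0 : (0:ℝ) ≤ s ^ (-β - 1) := Real.rpow_nonneg hs0.le _
    simp only [hFn, Real.norm_eq_abs]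
    rw [abs_mul, abs_mul, abs_of_nonneg hp0, abs_of_nonneg hQ0]
    calc |f (s • (ξ : EuclideanSpace ℝ (Fin d)))| * s ^ (-β - 1) *
          ((h ^ (1/β) * s) ^ (β + 1) * q (h ^ (1/β) * s) ξ)
        ≤ Cf * s ^ (-β - 1) * C₂ ξ := by
          refine mul_le_mul (mul_le_mul_of_nonneg_right (hCf _) hp0) hQle hQ0 ?_
          positivity
      _ = Cf * C₂ ξ * s ^ (-β - 1) := by ring
  -- Integrability of the dominating function in s
  have hKint : IntegrableOn (fun s : ℝ => s ^ (-β - 1)) (Ioi ε) := by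
    exact integrableOn_Ioi_rpow_of_lt (by linarith) hε
  set K : ℝ := ∫ s in Ioi ε, s ^ (-β - 1) with hK
  have hK0 : 0 ≤ K :=
    setIntegral_nonneg measurableSet_Ioi fun s hs =>
      Real.rpow_nonneg (le_of_lt (hε.trans hs)) _
  -- measurability of Fn h ξ in s
  have hFnmeas : ∀ (h : ℝ) (ξ : (Metric.sphere (0 : EuclideanSpace ℝ (Fin d)) 1)),
      AEStronglyMeasurable (Fn h ξ) (volume.restrict (Ioi ε)) := by
    intro h ξ
    have m1 : Measurable fun s : ℝ => f (s • (ξ : EuclideanSpace ℝ (Fin d))) :=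
      (hf_cont.comp (continuous_id.smul continuous_const)).measurable
    have m2 : Measurable fun s : ℝ => s ^ (-β - 1) :=
      measurable_id.pow measurable_const
    have m3 : Measurable fun s : ℝ => (h ^ (1/β) * s) ^ (β + 1) :=
      ((measurable_const_mul _).pow measurable_const)
    have m4 : Measurable fun s : ℝ => q (h ^ (1/β) * s) ξ :=
      (hqsec ξ).comp (measurable_const_mul _)
    exact (((m1.mul m2).mul (m3.mul m4)).aestronglyMeasurable)
  -- inner limit
  have hinner : ∀ ξ : (Metric.sphere (0 : EuclideanSpace ℝ (Fin d)) 1),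
      Tendsto (fun h : ℝ => ∫ s in Ioi ε, Fn h ξ s) atTop
        (nhds (∫ s in Ioi ε,
          f (s • (ξ : EuclideanSpace ℝ (Fin d))) * s ^ (-β - 1) * c₂ ξ)) := by
    intro ξ
    have hev : ∀ᶠ h : ℝ in atTop, ε⁻¹ ≤ h ^ (1/β) :=
      (tendsto_rpow_atTop h1β).eventually_ge_atTop ε⁻¹
    refine tendsto_integral_filter_of_dominated_convergence
      (fun s => Cf * C₂ ξ * s ^ (-β - 1))
      (Eventually.of_forall fun h => hFnmeas h ξ) ?_
      ((hKint.const_mul _)) ?_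
    · filter_upwards [hev] with h hh
      refine (ae_restrict_iff' measurableSet_Ioi).mpr (ae_of_all _ fun s hs => ?_)
      have hs' : ε < s := hs
      have : (1:ℝ) ≤ h ^ (1/β) * s := by
        have h1 : ε⁻¹ * ε ≤ h ^ (1/β) * s := by
          apply mul_le_mul hh hs'.le hε.le
          exact le_trans (by positivity) hh
        rwa [inv_mul_cancel₀ hε.ne'] at h1
      exact hbnd ξ h s this hs'
    · refine (ae_restrict_iff' measurableSet_Ioi).mpr (ae_of_all _ fun s hs => ?_)
      have hs0 : (0:ℝ) < s := hε.trans hs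
      have hg : Tendsto (fun h : ℝ => h ^ (1/β) * s) atTop atTop :=
        (tendsto_rpow_atTop h1β).atTop_mul_const hs0
      have hcomp : Tendsto
          (fun h : ℝ => (h ^ (1/β) * s) ^ (β + 1) * q (h ^ (1/β) * s) ξ) atTop
          (nhds (c₂ ξ)) := (hA2 ξ).comp hg
      simpa only [hFn] using
        (tendsto_const_nhds.mul hcomp : Tendsto (fun h : ℝ =>
          (f (s • (ξ : EuclideanSpace ℝ (Fin d))) * s ^ (-β - 1)) *
            ((h ^ (1/β) * s) ^ (β + 1) * q (h ^ (1/β) * s) ξ)) atTop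
          (nhds (f (s • (ξ : EuclideanSpace ℝ (Fin d))) * s ^ (-β - 1) * c₂ ξ)))
  -- identification of the limit value
  have hval : ∀ ξ : (Metric.sphere (0 : EuclideanSpace ℝ (Fin d)) 1),
      (∫ s in Ioi ε, f (s • (ξ : EuclideanSpace ℝ (Fin d))) * s ^ (-β - 1) * c₂ ξ)
      = c₂ ξ * ∫ r in Ioi (0:ℝ),
          f (r • (ξ : EuclideanSpace ℝ (Fin d))) * r ^ (-β - 1) := by
    intro ξ
    rw [integral_mul_const]
    rw [show (∫ r in Ioi (0:ℝ), f (r • (ξ : EuclideanSpace ℝ (Fin d))) * r ^ (-β - 1))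
        = ∫ s in Ioi ε, f (s • (ξ : EuclideanSpace ℝ (Fin d))) * s ^ (-β - 1) from
      setIntegral_eq_of_subset_of_forall_diff_eq_zero measurableSet_Ioi hsub
        fun s hs => by rw [hvanish ξ s hs, zero_mul]]
    ring
  -- now the outer dominated convergence
  have hgoal : Tendsto
      (fun h : ℝ => ∫ ξ, (h * ∫ r in Ioi (0 : ℝ),
        f ((h ^ (-(1 / β)) * r) • (ξ : EuclideanSpace ℝ (Fin d))) * q r ξ) ∂σ)
      atTop
      (nhds (∫ ξ, c₂ ξ * (∫ r in Ioi (0 : ℝ),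
        f (r • (ξ : EuclideanSpace ℝ (Fin d))) * r ^ (-β - 1)) ∂σ)) := by
    have hev : ∀ᶠ h : ℝ in atTop, 0 < h ∧ ε⁻¹ ≤ h ^ (1/β) := by
      filter_upwards [eventually_gt_atTop (0:ℝ),
        (tendsto_rpow_atTop h1β).eventually_ge_atTop ε⁻¹] with h h1 h2
      exact ⟨h1, h2⟩
    refine tendsto_integral_filter_of_dominated_convergence
      (fun ξ => Cf * C₂ ξ * K) ?_ ?_ ((hC₂_int.const_mul Cf).mul_const K) ?_
    · refine Eventually.of_forall fun h => ?_
      have m : StronglyMeasurable fun p : (Metric.sphere (0 : EuclideanSpace ℝ (Fin d)) 1) × ℝ =>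
          f ((h ^ (-(1/β)) * p.2) • (p.1 : EuclideanSpace ℝ (Fin d))) * q p.2 p.1 := by
        refine Measurable.stronglyMeasurable ?_
        refine Measurable.mul ?_ (hq_meas.comp (measurable_snd.prodMk measurable_fst))
        exact (hf_cont.comp ((continuous_const.mul continuous_snd).smul
          (continuous_subtype_val.comp continuous_fst))).measurable
      exact ((m.integral_prod_right').measurable.const_mul h).aestronglyMeasurable
    · filter_upwards [hev] with h hh
      obtain ⟨hh0, hhε⟩ := hh
      refine ae_of_all _ fun ξ => ?_
      rw [key ξ h hh0]
      calc ‖∫ s in Ioi ε, Fn h ξ s‖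
          ≤ ∫ s in Ioi ε, Cf * C₂ ξ * s ^ (-β - 1) := by
            refine norm_integral_le_of_norm_le (hKint.const_mul _) ?_
            refine (ae_restrict_iff' measurableSet_Ioi).mpr (ae_of_all _ fun s hs => ?_)
            have hs' : ε < s := hs
            have : (1:ℝ) ≤ h ^ (1/β) * s := by
              have h1 : ε⁻¹ * ε ≤ h ^ (1/β) * s := by
                apply mul_le_mul hhε hs'.le hε.le
                exact le_trans (by positivity) hhε
              rwa [inv_mul_cancel₀ hε.ne'] at h1
            exact hbnd ξ h s this hs'
        _ = Cf * C₂ ξ * K := by rw [integral_const_mul]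
    · refine ae_of_all _ fun ξ => ?_
      rw [← hval ξ]
      refine Tendsto.congr' ?_ (hinner ξ)
      filter_upwards [eventually_gt_atTop (0:ℝ)] with h hh0
      exact (key ξ h hh0).symm
  refine hgoal.congr fun h => ?_
  rw [integral_const_mul]
end

section
/- Assume β ∈ (2,∞) and (D2). Then the Brownian-scaled layered stable Lévy measures h·(T_{h^{-1/2}}ν) converge vaguely to the zero measure as h → ∞: for every bounded continuous function f : ℝ^d → ℝ that vanishes on a neighborhood of the origin, lim_{h→∞} h ∫_{S^{d-1}} ∫_0^∞ f(h^{-1/2} r ξ) q(r,ξ) dr σ(dξ) = 0. (Vanishing of the Lévy measure in the proof of Theorem 3.2(ii), the Gaussian long time behavior of layered stable processes with outer index β > 2.) -/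
open MeasureTheory Set Filter

/-- Vanishing of the Lévy measure in the proof of Theorem 3.2(ii): for `β > 2`,
under (D2), the Brownian-scaled layered stable Lévy measures `h · T_{h^{-1/2}} ν`
converge vaguely to the zero measure as `h → ∞`. -/
theorem layered_stable_brownian_scaling_levy_measure_vanishes
    (d : ℕ) (hd : 1 ≤ d)
    (σ : Measure (Metric.sphere (0 : EuclideanSpace ℝ (Fin d)) 1))
    [IsFiniteMeasure σ]
    (β : ℝ) (hβ : 2 < β)
    (q : ℝ → Metric.sphere (0 : EuclideanSpace ℝ (Fin d)) 1 → ℝ)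
    (hq_meas : Measurable (Function.uncurry q))
    (hq_pos : ∀ r : ℝ, 0 < r → ∀ ξ, 0 < q r ξ)
    (C₂ : Metric.sphere (0 : EuclideanSpace ℝ (Fin d)) 1 → ℝ)
    (hC₂_nonneg : ∀ ξ, 0 ≤ C₂ ξ) (hC₂_int : Integrable C₂ σ)
    (hD2 : ∀ ξ, ∀ r : ℝ, 1 ≤ r → q r ξ ≤ C₂ ξ * r ^ (-β - 1))
    (f : EuclideanSpace ℝ (Fin d) → ℝ)
    (hf_cont : Continuous f)
    (hf_bdd : ∃ C : ℝ, ∀ x, |f x| ≤ C)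
    (hf_van : ∃ ε : ℝ, 0 < ε ∧ ∀ x : EuclideanSpace ℝ (Fin d), ‖x‖ ≤ ε → f x = 0) :
    Tendsto
      (fun h : ℝ => h * ∫ ξ, (∫ r in Ioi (0 : ℝ),
        f ((h ^ (-(1 / 2 : ℝ)) * r) • (ξ : EuclideanSpace ℝ (Fin d))) * q r ξ) ∂σ)
      atTop (nhds 0) := by
  obtain ⟨C, hC⟩ := hf_bdd
  obtain ⟨ε, hε, hf0⟩ := hf_van
  have hC0 : 0 ≤ C := le_trans (abs_nonneg _) (hC 0)
  have hβ0 : 0 < β := by linarith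
  set K : ℝ := C * ε ^ (-β) * (∫ ξ, C₂ ξ ∂σ) / β with hK
  have hKtend : Tendsto (fun h : ℝ => K * h ^ (1 - β / 2)) atTop (nhds 0) := by
    have h1 : Tendsto (fun h : ℝ => h ^ (1 - β / 2)) atTop (nhds 0) := by
      have := tendsto_rpow_neg_atTop (by linarith : (0:ℝ) < β / 2 - 1)
      simpa [neg_sub] using this
    simpa using h1.const_mul K
  apply squeeze_zero_norm' _ hKtend
  have haux : Tendsto (fun h : ℝ => ε * h ^ ((1:ℝ) / 2)) atTop atTop :=
    (tendsto_rpow_atTop (by norm_num)).const_mul_atTop hε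
  filter_upwards [eventually_ge_atTop (1:ℝ), haux.eventually_ge_atTop 1] with h h1 hεh
  have hh0 : (0:ℝ) < h := lt_of_lt_of_le one_pos h1
  set s : ℝ := h ^ ((1:ℝ) / 2) with hs
  have hs0 : 0 < s := Real.rpow_pos_of_pos hh0 _
  set a : ℝ := ε * s with ha
  have ha0 : 0 < a := mul_pos hε hs0
  have ha1 : (1:ℝ) ≤ a := hεh
  have hinvs : h ^ (-(1 / 2 : ℝ)) = s⁻¹ := by
    rw [Real.rpow_neg hh0.le]
  have hinvs0 : 0 < h ^ (-(1 / 2 : ℝ)) := Real.rpow_pos_of_pos hh0 _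
  -- inner bound
  have hinner : ∀ ξ : Metric.sphere (0 : EuclideanSpace ℝ (Fin d)) 1,
      ‖∫ r in Ioi (0:ℝ),
          f ((h ^ (-(1 / 2 : ℝ)) * r) • (ξ : EuclideanSpace ℝ (Fin d))) * q r ξ‖
        ≤ C * C₂ ξ * (a ^ (-β) / β) := by
    intro ξ
    set g : ℝ → ℝ :=
      fun r => f ((h ^ (-(1 / 2 : ℝ)) * r) • (ξ : EuclideanSpace ℝ (Fin d))) * q r ξ with hg
    have hξn : ‖(ξ : EuclideanSpace ℝ (Fin d))‖ = 1 := by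
      have := ξ.2
      rwa [mem_sphere_zero_iff_norm] at this
    have hznorm : ∀ r : ℝ, 0 < r →
        ‖(h ^ (-(1 / 2 : ℝ)) * r) • (ξ : EuclideanSpace ℝ (Fin d))‖
          = h ^ (-(1 / 2 : ℝ)) * r := by
      intro r hr
      rw [norm_smul, hξn, mul_one, Real.norm_eq_abs, abs_of_pos (mul_pos hinvs0 hr)]
    have hz : ∀ r ∈ Ioc (0:ℝ) a, g r = 0 := by
      intro r hr
      have hle : ‖(h ^ (-(1 / 2 : ℝ)) * r) • (ξ : EuclideanSpace ℝ (Fin d))‖ ≤ ε := by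
        rw [hznorm r hr.1, hinvs]
        have : s⁻¹ * r ≤ s⁻¹ * a := by
          exact mul_le_mul_of_nonneg_left hr.2 (inv_nonneg.2 hs0.le)
        calc s⁻¹ * r ≤ s⁻¹ * a := this
          _ = ε := by rw [ha]; field_simp
      simp only [hg]
      rw [hf0 _ hle, zero_mul]
    have hsplit : ∫ r in Ioi (0:ℝ), g r = ∫ r in Ioi a, g r := by
      have h1 : ∫ r in Ioi (0:ℝ), g r = ∫ r in Ioi (0:ℝ), (Ioi a).indicator g r := by
        apply setIntegral_congr_fun measurableSet_Ioi
        intro r hr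
        by_cases hra : a < r
        · simp [indicator_of_mem, hra]
        · push_neg at hra
          rw [hz r ⟨hr, hra⟩, indicator_of_notMem (by simpa using hra)]
      rw [h1, setIntegral_indicator measurableSet_Ioi,
        show Ioi (0:ℝ) ∩ Ioi a = Ioi a by
          rw [Ioi_inter_Ioi, max_eq_right ha0.le]]
    rw [hsplit]
    have hb_int : IntegrableOn (fun r : ℝ => C * C₂ ξ * r ^ (-β - 1)) (Ioi a) := by
      exact (integrableOn_Ioi_rpow_of_lt (by linarith) ha0).const_mul _
    have hbd : ‖∫ r in Ioi a, g r‖ ≤ ∫ r in Ioi a, C * C₂ ξ * r ^ (-β - 1) := by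
      apply norm_integral_le_of_norm_le hb_int
      filter_upwards [ae_restrict_mem measurableSet_Ioi] with r hr
      have hr1 : (1:ℝ) ≤ r := le_of_lt (lt_of_le_of_lt ha1 hr)
      have hr0 : (0:ℝ) < r := lt_of_lt_of_le one_pos hr1
      have hqpos := hq_pos r hr0 ξ
      rw [hg]
      calc ‖f ((h ^ (-(1 / 2 : ℝ)) * r) • (ξ : EuclideanSpace ℝ (Fin d))) * q r ξ‖
          = |f ((h ^ (-(1 / 2 : ℝ)) * r) • (ξ : EuclideanSpace ℝ (Fin d)))| * q r ξ := by
            rw [Real.norm_eq_abs, abs_mul, abs_of_pos hqpos]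
        _ ≤ C * (C₂ ξ * r ^ (-β - 1)) :=
            mul_le_mul (hC _) (hD2 ξ r hr1) hqpos.le hC0
        _ = C * C₂ ξ * r ^ (-β - 1) := by ring
    refine hbd.trans (le_of_eq ?_)
    rw [MeasureTheory.integral_const_mul, integral_Ioi_rpow_of_lt (by linarith) ha0]
    rw [show (-β - 1 + 1) = -β by ring]
    field_simp
  -- outer bound
  have houter : ‖∫ ξ, (∫ r in Ioi (0:ℝ),
      f ((h ^ (-(1 / 2 : ℝ)) * r) • (ξ : EuclideanSpace ℝ (Fin d))) * q r ξ) ∂σ‖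
      ≤ ∫ ξ, C * C₂ ξ * (a ^ (-β) / β) ∂σ := by
    apply norm_integral_le_of_norm_le
    · exact (hC₂_int.const_mul C).mul_const _
    · exact ae_of_all _ hinner
  have hout_eq : ∫ ξ, C * C₂ ξ * (a ^ (-β) / β) ∂σ
      = C * (a ^ (-β) / β) * ∫ ξ, C₂ ξ ∂σ := by
    rw [← MeasureTheory.integral_const_mul]
    congr 1
    ext ξ
    ring
  have hrwa : a ^ (-β) = ε ^ (-β) * h ^ (-(β / 2)) := by
    rw [ha, Real.mul_rpow hε.le hs0.le, hs, ← Real.rpow_mul hh0.le,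
      show (1 / 2 : ℝ) * (-β) = -(β / 2) by ring]
  have hpow : h * h ^ (-(β / 2)) = h ^ (1 - β / 2) := by
    rw [show (1 - β / 2) = 1 + -(β / 2) by ring, Real.rpow_add hh0, Real.rpow_one]
  rw [Real.norm_eq_abs, abs_mul, abs_of_pos hh0]
  calc h * |∫ ξ, (∫ r in Ioi (0:ℝ),
        f ((h ^ (-(1 / 2 : ℝ)) * r) • (ξ : EuclideanSpace ℝ (Fin d))) * q r ξ) ∂σ|
      ≤ h * (C * (a ^ (-β) / β) * ∫ ξ, C₂ ξ ∂σ) := by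
        apply mul_le_mul_of_nonneg_left _ hh0.le
        rw [← hout_eq]
        exact houter
    _ = K * h ^ (1 - β / 2) := by
        rw [hrwa, hK, ← hpow]
        ring
end

section
/- Assume there are constants 0 < m ≤ M and a σ-integrable c₁ : S^{d-1} → [0,∞) with σ₁(S^{d-1}) > 0 such that m c₁(ξ) r^{-α-1} ≤ q(r,ξ) ≤ M c₁(ξ) r^{-α-1} for all 0 < r ≤ 1 and all ξ. Then for every p > 0, ∫_{{z : 0 < ‖z‖ ≤ 1}} ‖z‖^p ν(dz) < ∞ if and only if p > α. (Lévy-measure criterion underlying Proposition 2.6: a layered stable process has a.s. finite variation iff α < 1, and finite p-th variation iff p > α.) -/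
open MeasureTheory Set Filter
open scoped ENNReal

lemma rpow_lintegral_Ioc_lt_top_iff (s : ℝ) :
    (∫⁻ r in Ioc (0 : ℝ) 1, ENNReal.ofReal (r ^ s)) < ⊤ ↔ -1 < s := by
  rw [← MeasureTheory.restrict_Ioo_eq_restrict_Ioc]
  have hmeas : AEStronglyMeasurable (fun r : ℝ => r ^ s)
      (volume.restrict (Ioo (0 : ℝ) 1)) :=
    (measurable_id.pow_const s).aestronglyMeasurable
  have hnn : 0 ≤ᵐ[volume.restrict (Ioo (0 : ℝ) 1)] fun r : ℝ => r ^ s := by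
    refine (ae_restrict_iff' measurableSet_Ioo).2 (ae_of_all _ fun r hr => ?_)
    exact Real.rpow_nonneg hr.1.le s
  rw [← intervalIntegral.integrableOn_Ioo_rpow_iff (one_pos : (0:ℝ) < 1)]
  rw [IntegrableOn, Integrable, hasFiniteIntegral_iff_ofReal hnn,
    and_iff_right hmeas, lt_top_iff_ne_top]

/-- Lévy-measure criterion underlying Proposition 2.6 (p-th variation): if the
radial density `q` is comparable near the origin to `c₁(ξ) r^{-α-1}` with
`σ₁(S^{d-1}) > 0`, then `∫_{0<‖z‖≤1} ‖z‖^p dν < ∞` if and only if `p > α`. -/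
theorem layered_stable_small_jump_moment_criterion
    (d : ℕ) (hd : 1 ≤ d)
    (σ : Measure (Metric.sphere (0 : EuclideanSpace ℝ (Fin d)) 1))
    [IsFiniteMeasure σ]
    (α : ℝ) (hα0 : 0 < α) (hα2 : α < 2)
    (q : ℝ → Metric.sphere (0 : EuclideanSpace ℝ (Fin d)) 1 → ℝ)
    (hq_meas : Measurable (Function.uncurry q))
    (hq_pos : ∀ r : ℝ, 0 < r → ∀ ξ, 0 < q r ξ)
    (c₁ : Metric.sphere (0 : EuclideanSpace ℝ (Fin d)) 1 → ℝ)
    (hc₁_nonneg : ∀ ξ, 0 ≤ c₁ ξ) (hc₁_int : Integrable c₁ σ)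
    (hσ₁_pos : 0 < ∫ ξ, c₁ ξ ∂σ)
    (m M : ℝ) (hm : 0 < m) (hmM : m ≤ M)
    (hq_lower : ∀ ξ, ∀ r : ℝ, 0 < r → r ≤ 1 → m * c₁ ξ * r ^ (-α - 1) ≤ q r ξ)
    (hq_upper : ∀ ξ, ∀ r : ℝ, 0 < r → r ≤ 1 → q r ξ ≤ M * c₁ ξ * r ^ (-α - 1)) :
    ∀ p : ℝ, 0 < p →
      ((∫⁻ ξ, (∫⁻ r in Ioc (0 : ℝ) 1, ENNReal.ofReal (r ^ p * q r ξ)) ∂σ < ⊤) ↔ α < p) := by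
  intro p hp
  set J : ℝ≥0∞ := ∫⁻ r in Ioc (0 : ℝ) 1, ENNReal.ofReal (r ^ (p - α - 1)) with hJ
  set I : Metric.sphere (0 : EuclideanSpace ℝ (Fin d)) 1 → ℝ≥0∞ :=
    fun ξ => ∫⁻ r in Ioc (0 : ℝ) 1, ENNReal.ofReal (r ^ p * q r ξ) with hI
  -- pointwise comparison on (0,1]
  have hrpow : ∀ r : ℝ, 0 < r → r ^ p * r ^ (-α - 1) = r ^ (p - α - 1) := by
    intro r hr
    rw [← Real.rpow_add hr]; ring_nf
  have hI_low : ∀ ξ, ENNReal.ofReal (m * c₁ ξ) * J ≤ I ξ := by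
    intro ξ
    have : ∀ r ∈ Ioc (0 : ℝ) 1,
        ENNReal.ofReal (m * c₁ ξ) * ENNReal.ofReal (r ^ (p - α - 1))
          ≤ ENNReal.ofReal (r ^ p * q r ξ) := by
      intro r hr
      rw [← ENNReal.ofReal_mul (mul_nonneg hm.le (hc₁_nonneg ξ))]
      apply ENNReal.ofReal_le_ofReal
      calc m * c₁ ξ * r ^ (p - α - 1) = r ^ p * (m * c₁ ξ * r ^ (-α - 1)) := by
            rw [← hrpow r hr.1]; ring
        _ ≤ r ^ p * q r ξ :=
          mul_le_mul_of_nonneg_left (hq_lower ξ r hr.1 hr.2)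
            (Real.rpow_nonneg hr.1.le p)
    calc ENNReal.ofReal (m * c₁ ξ) * J
        = ∫⁻ r in Ioc (0 : ℝ) 1,
            ENNReal.ofReal (m * c₁ ξ) * ENNReal.ofReal (r ^ (p - α - 1)) :=
          (lintegral_const_mul' _ _ ENNReal.ofReal_ne_top).symm
      _ ≤ I ξ := lintegral_mono_ae
          ((ae_restrict_iff' measurableSet_Ioc).2 (ae_of_all _ this))
  have hI_up : ∀ ξ, I ξ ≤ ENNReal.ofReal (M * c₁ ξ) * J := by
    intro ξ
    have : ∀ r ∈ Ioc (0 : ℝ) 1,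
        ENNReal.ofReal (r ^ p * q r ξ)
          ≤ ENNReal.ofReal (M * c₁ ξ) * ENNReal.ofReal (r ^ (p - α - 1)) := by
      intro r hr
      rw [← ENNReal.ofReal_mul (mul_nonneg (hm.trans_le hmM).le (hc₁_nonneg ξ))]
      apply ENNReal.ofReal_le_ofReal
      calc r ^ p * q r ξ ≤ r ^ p * (M * c₁ ξ * r ^ (-α - 1)) :=
            mul_le_mul_of_nonneg_left (hq_upper ξ r hr.1 hr.2)
              (Real.rpow_nonneg hr.1.le p)
        _ = M * c₁ ξ * r ^ (p - α - 1) := by rw [← hrpow r hr.1]; ring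
    calc I ξ ≤ ∫⁻ r in Ioc (0 : ℝ) 1,
            ENNReal.ofReal (M * c₁ ξ) * ENNReal.ofReal (r ^ (p - α - 1)) :=
          lintegral_mono_ae
            ((ae_restrict_iff' measurableSet_Ioc).2 (ae_of_all _ this))
      _ = ENNReal.ofReal (M * c₁ ξ) * J :=
          lintegral_const_mul' _ _ ENNReal.ofReal_ne_top
  constructor
  · -- finiteness implies α < p ; contrapositive
    intro hfin
    by_contra hle
    push_neg at hle
    have hJtop : J = ⊤ := by
      by_contra hJt
      have := (rpow_lintegral_Ioc_lt_top_iff (p - α - 1)).1 (lt_top_iff_ne_top.2 hJt)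
      linarith
    -- a.e. measurable representative of c₁
    set g := hc₁_int.1.mk c₁ with hg
    have hgmeas : StronglyMeasurable g := hc₁_int.1.stronglyMeasurable_mk
    have hgae : c₁ =ᵐ[σ] g := hc₁_int.1.ae_eq_mk
    have hA : MeasurableSet {ξ | 0 < g ξ} :=
      measurableSet_lt measurable_const hgmeas.measurable
    have hApos : σ {ξ | 0 < g ξ} ≠ 0 := by
      intro h0
      have hgle : g ≤ᵐ[σ] 0 := by
        have : ∀ᵐ ξ ∂σ, g ξ ≤ 0 := ae_iff.2 (by simpa [not_le] using h0)
        filter_upwards [this] with ξ h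
        simpa using h
      have : ∫ ξ, c₁ ξ ∂σ ≤ 0 := by
        rw [integral_congr_ae hgae]
        exact integral_nonpos_of_ae hgle
      linarith
    have htop : ∫⁻ ξ, I ξ ∂σ = ⊤ := by
      have h1 : ∫⁻ ξ in {ξ | 0 < g ξ}, I ξ ∂σ = ⊤ := by
        have hIe : ∀ᵐ ξ ∂σ.restrict {ξ | 0 < g ξ}, I ξ = ⊤ := by
          have h1 : ∀ᵐ ξ ∂σ.restrict {ξ | 0 < g ξ}, c₁ ξ = g ξ :=
            ae_restrict_of_ae hgae
          have h2 : ∀ᵐ ξ ∂σ.restrict {ξ | 0 < g ξ}, 0 < g ξ :=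
            (ae_restrict_iff' hA).2 (ae_of_all _ fun ξ hξ => hξ)
          filter_upwards [h1, h2] with ξ hc hξ
          have hpos : 0 < m * c₁ ξ := mul_pos hm (hc ▸ hξ)
          have := hI_low ξ
          rw [hJtop, ENNReal.mul_top (by simpa [ENNReal.ofReal_pos] using hpos :
            ENNReal.ofReal (m * c₁ ξ) ≠ 0)] at this
          exact top_le_iff.1 this
        rw [lintegral_congr_ae hIe, setLIntegral_const]
        exact ENNReal.top_mul hApos
      have := setLIntegral_le_lintegral {ξ | 0 < g ξ} I (μ := σ)
      rw [h1] at this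
      exact top_le_iff.1 this
    rw [htop] at hfin
    exact absurd hfin (lt_irrefl _)
  · -- α < p implies finiteness
    intro hαp
    have hJfin : J < ⊤ := (rpow_lintegral_Ioc_lt_top_iff (p - α - 1)).2 (by linarith)
    calc ∫⁻ ξ, I ξ ∂σ ≤ ∫⁻ ξ, ENNReal.ofReal (M * c₁ ξ) * J ∂σ :=
          lintegral_mono hI_up
      _ = (∫⁻ ξ, ENNReal.ofReal (M * c₁ ξ) ∂σ) * J :=
          lintegral_mul_const' _ _ hJfin.ne
      _ < ⊤ := by
          apply ENNReal.mul_lt_top _ hJfin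
          have : (∫⁻ ξ, ENNReal.ofReal (M * c₁ ξ) ∂σ)
              = ENNReal.ofReal M * ∫⁻ ξ, ENNReal.ofReal (c₁ ξ) ∂σ := by
            rw [← lintegral_const_mul' _ _ ENNReal.ofReal_ne_top]
            refine lintegral_congr fun ξ => ?_
            rw [← ENNReal.ofReal_mul (hm.trans_le hmM).le]
          rw [this]
          exact ENNReal.mul_lt_top ENNReal.ofReal_lt_top hc₁_int.lintegral_lt_top
end

section
/- Assume (D1), (D2), that c₁ is σ-integrable with c₁(ξ) > 0 for all ξ, and that there exist δ ∈ (0,1) and C > 0 such that |φ(r,ξ)| ≤ C·r for all 0 < r ≤ δ and all ξ, where φ(r,ξ) := ln(r^{α+1} q(r,ξ) / c₁(ξ)). Then the three conditions of Sato's absolute-continuity criterion hold for the pair (ν, ν^α_{σ₁}): (a) ∫_{S^{d-1}} ∫_0^∞ 1_{{|φ(r,ξ)| ≤ 1}} φ(r,ξ)² c₁(ξ) r^{-α-1} dr σ(dξ) < ∞; (b) ∫_{S^{d-1}} ∫_0^∞ 1_{{φ(r,ξ) > 1}} q(r,ξ) dr σ(dξ) < ∞ (note e^{φ(r,ξ)}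 c₁(ξ) r^{-α-1} = q(r,ξ)); (c) ∫_{S^{d-1}} ∫_0^∞ 1_{{φ(r,ξ) < -1}} c₁(ξ) r^{-α-1} dr σ(dξ) < ∞. (These are the conditions verified in the proof of Theorem 4.1(i), establishing mutual absolute continuity of a layered stable process and its short time limiting α-stable process.) -/
open MeasureTheory Set Filter

/-!
Each of the three integrands is dominated by `a ξ * k r` with `a` integrable on the sphere
(`c₁`, or `C₁ + C₂`) and `k` integrable on `(0, ∞)`. Near the origin `|φ r ξ| ≤ C r` gives
`φ² r^{-α-1} ≤ C² r^{1-α}`, integrable at `0` because `α < 2`. It also gives `|φ| ≤ 1` for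
`r ≤ r₀ := min δ C⁻¹`, so the integrands of (b) and (c) vanish on `(0, r₀]`, and beyond `r₀`
(D1), (D2) and `α, β > 0` make `q` and `r^{-α-1}` integrable.
-/

lemma lintegral_lintegral_ofReal_lt_top_of_le_mul {X Y : Type*} [MeasurableSpace X]
    [MeasurableSpace Y] {μ : Measure X} {ν : Measure Y} {s : Set Y} (hs : MeasurableSet s)
    {F : X → Y → ℝ} {a : X → ℝ} {k : Y → ℝ} (ha₀ : ∀ x, 0 ≤ a x) (ha : Integrable a μ)
    (hk : IntegrableOn k s ν) (hF : ∀ x, ∀ y ∈ s, F x y ≤ a x * k y) :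
    ∫⁻ x, (∫⁻ y in s, ENNReal.ofReal (F x y) ∂ν) ∂μ < ⊤ := by
  set K := ∫⁻ y in s, ENNReal.ofReal (k y) ∂ν
  have hK : K < ⊤ := hk.lintegral_lt_top
  have hinner : ∀ x, ∫⁻ y in s, ENNReal.ofReal (F x y) ∂ν ≤ ENNReal.ofReal (a x) * K := fun x =>
    calc ∫⁻ y in s, ENNReal.ofReal (F x y) ∂ν
        ≤ ∫⁻ y in s, ENNReal.ofReal (a x) * ENNReal.ofReal (k y) ∂ν :=
          setLIntegral_mono' hs fun y hy => by
            rw [← ENNReal.ofReal_mul (ha₀ x)]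
            exact ENNReal.ofReal_le_ofReal (hF x y hy)
      _ = ENNReal.ofReal (a x) * K := lintegral_const_mul' _ _ ENNReal.ofReal_ne_top
  calc ∫⁻ x, (∫⁻ y in s, ENNReal.ofReal (F x y) ∂ν) ∂μ
      ≤ ∫⁻ x, ENNReal.ofReal (a x) * K ∂μ := lintegral_mono hinner
    _ = (∫⁻ x, ENNReal.ofReal (a x) ∂μ) * K := lintegral_mul_const' _ _ hK.ne
    _ < ⊤ := ENNReal.mul_lt_top ha.lintegral_lt_top hK

lemma integrableOn_Ioi_ite_le {E : Type*} [NormedAddCommGroup E] {f g : ℝ → E} {a b : ℝ}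
    (hba : b ≤ a) (hf : IntegrableOn f (Ioc b a)) (hg : IntegrableOn g (Ioi a)) :
    IntegrableOn (fun r => if r ≤ a then f r else g r) (Ioi b) := by
  rw [← Ioc_union_Ioi_eq_Ioi hba]
  exact (hf.congr_fun (fun r hr => (if_pos hr.2).symm) measurableSet_Ioc).union
    (hg.congr_fun (fun r hr => (if_neg (not_le.2 hr)).symm) measurableSet_Ioi)

lemma exists_pos_forall_abs_le_one_of_abs_le_mul {X : Type*} {φ : ℝ → X → ℝ} {δ C : ℝ}
    (hδ : 0 < δ) (hC : 0 < C) (hφ : ∀ ξ, ∀ r : ℝ, 0 < r → r ≤ δ → |φ r ξ| ≤ C * r) :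
    ∃ r₀ > 0, ∀ ξ, ∀ r : ℝ, 0 < r → r ≤ r₀ → |φ r ξ| ≤ 1 := by
  refine ⟨min δ C⁻¹, lt_min hδ (inv_pos.2 hC), fun ξ r hr hr₀ => ?_⟩
  calc |φ r ξ| ≤ C * r := hφ ξ r hr (hr₀.trans (min_le_left _ _))
    _ ≤ C * C⁻¹ := by gcongr; exact hr₀.trans (min_le_right _ _)
    _ = 1 := mul_inv_cancel₀ hC.ne'

section SatoConditions

variable {X : Type*} [MeasurableSpace X] {σ : Measure X} {φ : ℝ → X → ℝ} {c : X → ℝ}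
  {α : ℝ}

lemma lintegral_ite_abs_le_one_sq_mul_rpow_lt_top {δ C : ℝ} (hα0 : 0 < α) (hα2 : α < 2)
    (hδ : 0 < δ) (hc₀ : ∀ ξ, 0 ≤ c ξ) (hc : Integrable c σ)
    (hφ : ∀ ξ, ∀ r : ℝ, 0 < r → r ≤ δ → |φ r ξ| ≤ C * r) :
    ∫⁻ ξ, (∫⁻ r in Ioi (0 : ℝ), ENNReal.ofReal
      (if |φ r ξ| ≤ 1 then (φ r ξ) ^ 2 * (c ξ * r ^ (-α - 1)) else 0)) ∂σ < ⊤ := by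
  refine lintegral_lintegral_ofReal_lt_top_of_le_mul measurableSet_Ioi hc₀ hc
    (k := fun r => if r ≤ δ then C ^ 2 * r ^ (1 - α) else r ^ (-α - 1)) ?_ fun ξ r hr => ?_
  · refine integrableOn_Ioi_ite_le hδ.le ?_ (integrableOn_Ioi_rpow_of_lt (by linarith) hδ)
    exact ((intervalIntegrable_iff_integrableOn_Ioc_of_le hδ.le).1
      (intervalIntegral.intervalIntegrable_rpow' (by linarith))).const_mul _
  have hr : 0 < r := hr
  have hc_rpow : 0 ≤ c ξ * r ^ (-α - 1) := mul_nonneg (hc₀ ξ) (by positivity)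
  split_ifs with hφ1 hrδ
  · have hsq : φ r ξ ^ 2 ≤ (C * r) ^ 2 := sq_le_sq.2 ((hφ ξ r hr hrδ).trans (le_abs_self _))
    calc φ r ξ ^ 2 * (c ξ * r ^ (-α - 1)) ≤ (C * r) ^ 2 * (c ξ * r ^ (-α - 1)) := by gcongr
      _ = c ξ * (C ^ 2 * r ^ (1 - α)) := by
        rw [show 1 - α = 2 + (-α - 1) by ring, Real.rpow_add hr, Real.rpow_two]; ring
  · have hsq : φ r ξ ^ 2 ≤ 1 := (sq_le_one_iff_abs_le_one _).2 hφ1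
    nlinarith
  · exact mul_nonneg (hc₀ ξ) (by positivity)
  · exact hc_rpow

lemma lintegral_ite_one_lt_lt_top_of_le_rpow {q : ℝ → X → ℝ} {C₁ C₂ : X → ℝ} {β r₀ : ℝ}
    (hα : -1 ≤ α) (hβ : 0 < β) (hr₀ : 0 < r₀)
    (hsmall : ∀ ξ, ∀ r : ℝ, 0 < r → r ≤ r₀ → |φ r ξ| ≤ 1)
    (hC₁_nonneg : ∀ ξ, 0 ≤ C₁ ξ) (hC₁_int : Integrable C₁ σ)
    (hD1 : ∀ ξ, ∀ r : ℝ, 0 < r → r ≤ 1 → q r ξ ≤ C₁ ξ * r ^ (-α - 1))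
    (hC₂_nonneg : ∀ ξ, 0 ≤ C₂ ξ) (hC₂_int : Integrable C₂ σ)
    (hD2 : ∀ ξ, ∀ r : ℝ, 1 ≤ r → q r ξ ≤ C₂ ξ * r ^ (-β - 1)) :
    ∫⁻ ξ, (∫⁻ r in Ioi (0 : ℝ), ENNReal.ofReal
      (if 1 < φ r ξ then q r ξ else 0)) ∂σ < ⊤ := by
  have hC_nonneg ξ : 0 ≤ C₁ ξ + C₂ ξ := add_nonneg (hC₁_nonneg ξ) (hC₂_nonneg ξ)
  refine lintegral_lintegral_ofReal_lt_top_of_le_mul measurableSet_Ioi hC_nonneg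
    (hC₁_int.add hC₂_int) (k := fun r => if r ≤ 1 then r₀ ^ (-α - 1) else r ^ (-β - 1))
    ?_ fun ξ r hr => ?_
  · exact integrableOn_Ioi_ite_le zero_le_one (integrableOn_const (by simp) (by simp))
      (integrableOn_Ioi_rpow_of_lt (by linarith) one_pos)
  have hr : 0 < r := hr
  split_ifs with hφ1 hr1
  · have hr₀r : r₀ ≤ r :=
      le_of_not_ge fun h => (hsmall ξ r hr h).not_gt (hφ1.trans_le (le_abs_self _))
    calc q r ξ ≤ C₁ ξ * r ^ (-α - 1) := hD1 ξ r hr hr1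
      _ ≤ C₁ ξ * r₀ ^ (-α - 1) := mul_le_mul_of_nonneg_left
        (Real.rpow_le_rpow_of_nonpos hr₀ hr₀r (by linarith)) (hC₁_nonneg ξ)
      _ ≤ (C₁ ξ + C₂ ξ) * r₀ ^ (-α - 1) := by gcongr; linarith [hC₂_nonneg ξ]
  · calc q r ξ ≤ C₂ ξ * r ^ (-β - 1) := hD2 ξ r (le_of_not_ge hr1)
      _ ≤ (C₁ ξ + C₂ ξ) * r ^ (-β - 1) := by gcongr; linarith [hC₁_nonneg ξ]
  · exact mul_nonneg (hC_nonneg ξ) (by positivity)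
  · exact mul_nonneg (hC_nonneg ξ) (by positivity)

lemma lintegral_ite_lt_neg_one_mul_rpow_lt_top {r₀ : ℝ} (hα : 0 < α) (hr₀ : 0 < r₀)
    (hsmall : ∀ ξ, ∀ r : ℝ, 0 < r → r ≤ r₀ → |φ r ξ| ≤ 1)
    (hc₀ : ∀ ξ, 0 ≤ c ξ) (hc : Integrable c σ) :
    ∫⁻ ξ, (∫⁻ r in Ioi (0 : ℝ), ENNReal.ofReal
      (if φ r ξ < -1 then c ξ * r ^ (-α - 1) else 0)) ∂σ < ⊤ := by
  refine lintegral_lintegral_ofReal_lt_top_of_le_mul measurableSet_Ioi hc₀ hc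
    (k := fun r => if r ≤ r₀ then 0 else r ^ (-α - 1))
    (integrableOn_Ioi_ite_le hr₀.le integrableOn_zero
      (integrableOn_Ioi_rpow_of_lt (by linarith) hr₀)) fun ξ r hr => ?_
  have hr : 0 < r := hr
  split_ifs with hφ1 hrr₀
  · exact absurd (hsmall ξ r hr hrr₀) (not_le.2 (lt_abs.2 (Or.inr (by linarith))))
  · exact le_rfl
  · simp
  · exact mul_nonneg (hc₀ ξ) (by positivity)

end SatoConditions

theorem layered_stable_sato_absolute_continuity_conditions_general
    (d : ℕ)
    (σ : Measure (Metric.sphere (0 : EuclideanSpace ℝ (Fin d)) 1))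
    (α β : ℝ) (hα0 : 0 < α) (hα2 : α < 2) (hβ : 0 < β)
    (q : ℝ → Metric.sphere (0 : EuclideanSpace ℝ (Fin d)) 1 → ℝ)
    (c₁ C₁ C₂ : Metric.sphere (0 : EuclideanSpace ℝ (Fin d)) 1 → ℝ)
    (hc₁_pos : ∀ ξ, 0 < c₁ ξ) (hc₁_int : Integrable c₁ σ)
    (hC₁_nonneg : ∀ ξ, 0 ≤ C₁ ξ) (hC₁_int : Integrable C₁ σ)
    (hD1 : ∀ ξ, ∀ r : ℝ, 0 < r → r ≤ 1 → q r ξ ≤ C₁ ξ * r ^ (-α - 1))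
    (hC₂_nonneg : ∀ ξ, 0 ≤ C₂ ξ) (hC₂_int : Integrable C₂ σ)
    (hD2 : ∀ ξ, ∀ r : ℝ, 1 ≤ r → q r ξ ≤ C₂ ξ * r ^ (-β - 1))
    (φ : ℝ → Metric.sphere (0 : EuclideanSpace ℝ (Fin d)) 1 → ℝ)
    (δ C : ℝ) (hδ0 : 0 < δ) (hC : 0 < C)
    (hφ_lip : ∀ ξ, ∀ r : ℝ, 0 < r → r ≤ δ → |φ r ξ| ≤ C * r) :
    (∫⁻ ξ, (∫⁻ r in Ioi (0 : ℝ), ENNReal.ofReal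
      (if |φ r ξ| ≤ 1 then (φ r ξ) ^ 2 * (c₁ ξ * r ^ (-α - 1)) else 0)) ∂σ < ⊤) ∧
    (∫⁻ ξ, (∫⁻ r in Ioi (0 : ℝ), ENNReal.ofReal
      (if 1 < φ r ξ then q r ξ else 0)) ∂σ < ⊤) ∧
    (∫⁻ ξ, (∫⁻ r in Ioi (0 : ℝ), ENNReal.ofReal
      (if φ r ξ < -1 then c₁ ξ * r ^ (-α - 1) else 0)) ∂σ < ⊤) := by
  have hc₁_nonneg ξ : 0 ≤ c₁ ξ := (hc₁_pos ξ).le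
  obtain ⟨r₀, hr₀, hsmall⟩ := exists_pos_forall_abs_le_one_of_abs_le_mul hδ0 hC hφ_lip
  exact ⟨lintegral_ite_abs_le_one_sq_mul_rpow_lt_top hα0 hα2 hδ0 hc₁_nonneg hc₁_int hφ_lip,
    lintegral_ite_one_lt_lt_top_of_le_rpow (by linarith) hβ hr₀ hsmall hC₁_nonneg hC₁_int hD1
      hC₂_nonneg hC₂_int hD2,
    lintegral_ite_lt_neg_one_mul_rpow_lt_top hα0 hr₀ hsmall hc₁_nonneg hc₁_int⟩

/-- The three conditions of Sato's absolute-continuity criterion for the pair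
`(ν, ν^α_{σ₁})`, verified in the proof of Theorem 4.1(i): under (D1), (D2), with
`c₁` positive and with `φ(r,ξ) = ln(r^{α+1} q(r,ξ) / c₁(ξ))` satisfying
`|φ(r,ξ)| ≤ C r` near the origin, the three integrals (a), (b), (c) are finite. -/
theorem layered_stable_sato_absolute_continuity_conditions
    (d : ℕ) (hd : 1 ≤ d)
    (σ : Measure (Metric.sphere (0 : EuclideanSpace ℝ (Fin d)) 1))
    [IsFiniteMeasure σ]
    (α β : ℝ) (hα0 : 0 < α) (hα2 : α < 2) (hβ : 0 < β)
    (q : ℝ → Metric.sphere (0 : EuclideanSpace ℝ (Fin d)) 1 → ℝ)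
    (hq_meas : Measurable (Function.uncurry q))
    (hq_pos : ∀ r : ℝ, 0 < r → ∀ ξ, 0 < q r ξ)
    (c₁ C₁ C₂ : Metric.sphere (0 : EuclideanSpace ℝ (Fin d)) 1 → ℝ)
    (hc₁_pos : ∀ ξ, 0 < c₁ ξ) (hc₁_int : Integrable c₁ σ)
    (hC₁_nonneg : ∀ ξ, 0 ≤ C₁ ξ) (hC₁_int : Integrable C₁ σ)
    (hD1 : ∀ ξ, ∀ r : ℝ, 0 < r → r ≤ 1 → q r ξ ≤ C₁ ξ * r ^ (-α - 1))
    (hC₂_nonneg : ∀ ξ, 0 ≤ C₂ ξ) (hC₂_int : Integrable C₂ σ)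
    (hD2 : ∀ ξ, ∀ r : ℝ, 1 ≤ r → q r ξ ≤ C₂ ξ * r ^ (-β - 1))
    (φ : ℝ → Metric.sphere (0 : EuclideanSpace ℝ (Fin d)) 1 → ℝ)
    (hφ : ∀ r : ℝ, 0 < r → ∀ ξ, φ r ξ = Real.log (r ^ (α + 1) * q r ξ / c₁ ξ))
    (δ C : ℝ) (hδ0 : 0 < δ) (hδ1 : δ < 1) (hC : 0 < C)
    (hφ_lip : ∀ ξ, ∀ r : ℝ, 0 < r → r ≤ δ → |φ r ξ| ≤ C * r) :
    (∫⁻ ξ, (∫⁻ r in Ioi (0 : ℝ), ENNReal.ofReal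
      (if |φ r ξ| ≤ 1 then (φ r ξ) ^ 2 * (c₁ ξ * r ^ (-α - 1)) else 0)) ∂σ < ⊤) ∧
    (∫⁻ ξ, (∫⁻ r in Ioi (0 : ℝ), ENNReal.ofReal
      (if 1 < φ r ξ then q r ξ else 0)) ∂σ < ⊤) ∧
    (∫⁻ ξ, (∫⁻ r in Ioi (0 : ℝ), ENNReal.ofReal
      (if φ r ξ < -1 then c₁ ξ * r ^ (-α - 1) else 0)) ∂σ < ⊤) :=
  layered_stable_sato_absolute_continuity_conditions_general d σ α β hα0 hα2 hβ q c₁ C₁ C₂ hc₁_pos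
    hc₁_int hC₁_nonneg hC₁_int hD1 hC₂_nonneg hC₂_int hD2 φ δ C hδ0 hC hφ_lip
end

section
/- Let α > 0, c₁ ∈ (0,∞), and let q : (0,∞) → (0,∞) be measurable with ∫_ε^∞ q(s) ds < ∞ for every ε > 0 and lim_{s→0⁺} s^{α+1} q(s) = c₁. Set Q(r) = ∫_r^∞ q(s) ds. Then for every u > 0, lim_{h→0⁺} h^{-1/α} · inf{r > 0 : Q(r) < u/h} = (αu/c₁)^{-1/α}. (This is the scaling limit of the inverse tail function in the remark following Theorem 3.2, showing that the shot noise series of a layered stable process converges, under short time scaling, to an α-stable shot noise.) -/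
open MeasureTheory Set Filter

lemma tail_two_sided
    (α c₁ : ℝ) (hα : 0 < α) (hc₁ : 0 < c₁)
    (q : ℝ → ℝ)
    (hq_pos : ∀ s : ℝ, 0 < s → 0 < q s)
    (hq_int : ∀ ε : ℝ, 0 < ε → IntegrableOn q (Ioi ε))
    (hq_lim : Tendsto (fun s : ℝ => s ^ (α + 1) * q s) (nhdsWithin 0 (Ioi 0)) (nhds c₁))
    (η : ℝ) (hη : 0 < η) (hηA : η < c₁ / α) :
    ∃ δ₁ > 0, ∀ r : ℝ, 0 < r → r ≤ δ₁ →
      (c₁ / α - η) * r ^ (-α) ≤ (∫ s in Ioi r, q s) ∧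
      (∫ s in Ioi r, q s) ≤ (c₁ / α + η) * r ^ (-α) := by
  have hApos : 0 < c₁ / α := div_pos hc₁ hα
  have hαinv : (α : ℝ)⁻¹ * α = 1 := inv_mul_cancel₀ hα.ne'
  have hε' : 0 < α * η / 2 := by positivity
  obtain ⟨δ, hδpos, hδ⟩ := Metric.tendsto_nhdsWithin_nhds.mp hq_lim _ hε'
  set r₀ := δ / 2 with hr₀def
  have hr₀pos : 0 < r₀ := by positivity
  have hr₀δ : r₀ < δ := by rw [hr₀def]; linarith
  -- pointwise bounds
  have hpt : ∀ s : ℝ, 0 < s → s < δ →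
      (c₁ - α * η / 2) * s ^ (-(α+1)) ≤ q s ∧ q s ≤ (c₁ + α * η / 2) * s ^ (-(α+1)) := by
    intro s hs hsδ
    have h1 := hδ (mem_Ioi.mpr hs) (by rwa [Real.dist_eq, sub_zero, abs_of_pos hs])
    rw [Real.dist_eq, abs_lt] at h1
    have hsp : 0 < s ^ (α + 1) := Real.rpow_pos_of_pos hs _
    have hinv : s ^ (-(α+1)) = (s ^ (α+1))⁻¹ := Real.rpow_neg hs.le _
    have hqs : q s = (s ^ (α+1) * q s) * (s ^ (α+1))⁻¹ := by field_simp
    constructor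
    · calc (c₁ - α * η / 2) * s ^ (-(α+1)) = (c₁ - α*η/2) * (s ^ (α+1))⁻¹ := by rw [hinv]
        _ ≤ (s ^ (α+1) * q s) * (s ^ (α+1))⁻¹ :=
          mul_le_mul_of_nonneg_right (by linarith [h1.1]) (inv_nonneg.mpr hsp.le)
        _ = q s := hqs.symm
    · calc q s = (s ^ (α+1) * q s) * (s ^ (α+1))⁻¹ := hqs
        _ ≤ (c₁ + α*η/2) * (s ^ (α+1))⁻¹ :=
          mul_le_mul_of_nonneg_right (by linarith [h1.2]) (inv_nonneg.mpr hsp.le)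
        _ = (c₁ + α * η / 2) * s ^ (-(α+1)) := by rw [hinv]
  set C := ∫ s in Ioi r₀, q s with hCdef
  have hC0 : 0 ≤ C := setIntegral_nonneg measurableSet_Ioi
    (fun s hs => (hq_pos s (hr₀pos.trans hs)).le)
  have hB₀ : 0 < c₁ / α - η / 2 := by linarith
  set δ₁ := min r₀ (min ((η / (2 * (C + 1))) ^ α⁻¹) ((η * r₀ ^ α / (2 * (c₁/α - η/2))) ^ α⁻¹))
    with hδ₁def
  have hδ₁pos : 0 < δ₁ := by
    refine lt_min hr₀pos (lt_min (Real.rpow_pos_of_pos ?_ _) (Real.rpow_pos_of_pos ?_ _))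
    · positivity
    · have := Real.rpow_pos_of_pos hr₀pos α
      positivity
  refine ⟨δ₁, hδ₁pos, fun r hr hrδ₁ => ?_⟩
  have hrr₀ : r ≤ r₀ := hrδ₁.trans (min_le_left _ _)
  have hrδ : r < δ := lt_of_le_of_lt hrr₀ hr₀δ
  have hrpow : ∀ b : ℝ, 0 < b → r ≤ b ^ α⁻¹ → r ^ α ≤ b := by
    intro b hb hle
    have h2 : r ^ α ≤ (b ^ α⁻¹) ^ α := Real.rpow_le_rpow hr.le hle hα.le
    rwa [← Real.rpow_mul hb.le, inv_mul_cancel₀ hα.ne', Real.rpow_one] at h2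
  have hrα1 : r ^ α ≤ η / (2 * (C + 1)) :=
    hrpow _ (by positivity) (hrδ₁.trans ((min_le_right _ _).trans (min_le_left _ _)))
  have hrα2 : r ^ α ≤ η * r₀ ^ α / (2 * (c₁/α - η/2)) := by
    refine hrpow _ ?_ (hrδ₁.trans ((min_le_right _ _).trans (min_le_right _ _)))
    have := Real.rpow_pos_of_pos hr₀pos α
    positivity
  -- splitting
  have hsplit : (∫ s in Ioi r, q s) = (∫ s in Ioc r r₀, q s) + C := by
    rw [hCdef, ← setIntegral_union (Ioc_disjoint_Ioi le_rfl) measurableSet_Ioi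
        ((hq_int r hr).mono_set Ioc_subset_Ioi_self) (hq_int r₀ hr₀pos),
        Ioc_union_Ioi_eq_Ioi hrr₀]
  -- integrability of the power function on Ioc r r₀
  have hcont : ContinuousOn (fun s : ℝ => s ^ (-(α+1))) (Icc r r₀) := by
    apply ContinuousOn.rpow_const continuousOn_id
    intro x hx
    exact Or.inl (ne_of_gt (lt_of_lt_of_le hr hx.1))
  have hint_pow : ∀ d : ℝ, IntegrableOn (fun s : ℝ => d * s ^ (-(α+1))) (Ioc r r₀) := by
    intro d
    exact ((hcont.integrableOn_Icc).mono_set Ioc_subset_Icc_self).const_mul d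
  -- value of the power integral
  have hpow_val : ∀ d : ℝ, (∫ s in Ioc r r₀, d * s ^ (-(α+1))) =
      d * ((r ^ (-α) - r₀ ^ (-α)) / α) := by
    intro d
    rw [integral_const_mul]
    congr 1
    rw [← intervalIntegral.integral_of_le hrr₀,
      _root_.integral_rpow (Or.inr ⟨by intro h; apply hα.ne'; linarith,
        by rw [Set.uIcc_of_le hrr₀]; intro h; exact absurd h.1 (by linarith)⟩)]
    have he : -(α+1) + 1 = -α := by ring
    rw [he]
    rw [div_neg, ← neg_div, neg_sub]
  have hqint : IntegrableOn q (Ioc r r₀) := (hq_int r hr).mono_set Ioc_subset_Ioi_self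
  have hub : (∫ s in Ioc r r₀, q s) ≤ (c₁ + α*η/2) * ((r ^ (-α) - r₀ ^ (-α)) / α) := by
    rw [← hpow_val]
    refine setIntegral_mono_on hqint (hint_pow _) measurableSet_Ioc (fun s hs => ?_)
    exact (hpt s (hr.trans hs.1) (lt_of_le_of_lt hs.2 hr₀δ)).2
  have hlb : (c₁ - α*η/2) * ((r ^ (-α) - r₀ ^ (-α)) / α) ≤ (∫ s in Ioc r r₀, q s) := by
    rw [← hpow_val]
    refine setIntegral_mono_on (hint_pow _) hqint measurableSet_Ioc (fun s hs => ?_)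
    exact (hpt s (hr.trans hs.1) (lt_of_le_of_lt hs.2 hr₀δ)).1
  have hrneg : r ^ (-α) = (r ^ α)⁻¹ := Real.rpow_neg hr.le _
  have hrαpos : 0 < r ^ α := Real.rpow_pos_of_pos hr _
  have hr₀neg : r₀ ^ (-α) = (r₀ ^ α)⁻¹ := Real.rpow_neg hr₀pos.le _
  have hr₀αpos : 0 < r₀ ^ α := Real.rpow_pos_of_pos hr₀pos _
  have hr₀negpos : 0 < r₀ ^ (-α) := Real.rpow_pos_of_pos hr₀pos _
  have hrnegpos : 0 < r ^ (-α) := Real.rpow_pos_of_pos hr _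
  have hub2 : (c₁ + α*η/2) * ((r ^ (-α) - r₀ ^ (-α)) / α) =
      (c₁/α + η/2) * (r ^ (-α) - r₀ ^ (-α)) := by
    linear_combination ((η/2 * (r ^ (-α) - r₀ ^ (-α)))) * hαinv
  have hlb2 : (c₁ - α*η/2) * ((r ^ (-α) - r₀ ^ (-α)) / α) =
      (c₁/α - η/2) * (r ^ (-α) - r₀ ^ (-α)) := by
    linear_combination (-(η/2 * (r ^ (-α) - r₀ ^ (-α)))) * hαinv
  constructor
  · -- lower bound
    rw [hsplit]
    have key : (c₁/α - η/2) * r₀ ^ (-α) ≤ (η/2) * r ^ (-α) := by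
      have h5 : (c₁/α - η/2) * r ^ α ≤ (η/2) * r₀ ^ α := by
        rw [le_div_iff₀ (by positivity)] at hrα2
        linarith
      rw [hrneg, hr₀neg, inv_eq_one_div, inv_eq_one_div, mul_one_div, mul_one_div,
        div_le_div_iff₀ hr₀αpos hrαpos]
      linarith [h5]
    have hexp : (c₁/α - η/2) * (r ^ (-α) - r₀ ^ (-α)) =
        (c₁/α - η/2) * r ^ (-α) - (c₁/α - η/2) * r₀ ^ (-α) := by ring
    linarith [hlb, hlb2, key, hC0, hexp]
  · -- upper bound
    rw [hsplit]
    have hCsmall : C ≤ (η/2) * r ^ (-α) := by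
      have h6 : r ^ α * (2*(C+1)) ≤ η := (le_div_iff₀ (by positivity)).mp hrα1
      rw [hrneg, ← div_eq_mul_inv, le_div_iff₀ hrαpos]
      linarith [h6, hrαpos]
    have h7 : 0 ≤ (c₁/α + η/2) * r₀ ^ (-α) := by positivity
    have hexp : (c₁/α + η/2) * (r ^ (-α) - r₀ ^ (-α)) =
        (c₁/α + η/2) * r ^ (-α) - (c₁/α + η/2) * r₀ ^ (-α) := by ring
    linarith [hub, hub2, hCsmall, h7, hexp]

/-- Scaling limit of the inverse tail function (remark after Theorem 3.2): if
`q(s) ~ c₁ s^{-α-1}` as `s → 0⁺`, then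
`h^{-1/α} · inf{r > 0 : Q(r) < u/h} → (αu/c₁)^{-1/α}` as `h → 0⁺`, showing that the
shot noise series of a layered stable process converges, under short time scaling,
to an `α`-stable shot noise. -/
theorem layered_stable_inverse_tail_scaling_limit
    (α c₁ : ℝ) (hα : 0 < α) (hc₁ : 0 < c₁)
    (q : ℝ → ℝ) (hq_meas : Measurable q)
    (hq_pos : ∀ s : ℝ, 0 < s → 0 < q s)
    (hq_int : ∀ ε : ℝ, 0 < ε → IntegrableOn q (Ioi ε))
    (hq_lim : Tendsto (fun s : ℝ => s ^ (α + 1) * q s)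
      (nhdsWithin 0 (Ioi 0)) (nhds c₁)) :
    ∀ u : ℝ, 0 < u →
      Tendsto
        (fun h : ℝ => h ^ (-(1 / α)) *
          sInf {r : ℝ | 0 < r ∧ (∫ s in Ioi r, q s) < u / h})
        (nhdsWithin 0 (Ioi 0))
        (nhds ((α * u / c₁) ^ (-(1 / α)))) := by
  intro u hu
  have hPpos : 0 < c₁ / α := div_pos hc₁ hα
  have hgL : (c₁ / α / u) ^ (1/α) = (α * u / c₁) ^ (-(1 / α)) := by
    rw [Real.rpow_neg (by positivity), ← Real.inv_rpow (by positivity), div_div, inv_div]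
  -- continuity of the limiting expression
  have hgcont : Tendsto (fun x : ℝ => ((c₁/α + x)/u) ^ (1/α)) (nhds 0)
      (nhds ((α * u / c₁) ^ (-(1 / α)))) := by
    rw [← hgL]
    have h1 : ContinuousAt (fun y : ℝ => y ^ (1/α)) (c₁/α/u) :=
      Real.continuousAt_rpow_const _ _ (Or.inl (by positivity : (0:ℝ) < c₁/α/u).ne')
    have h2 : Tendsto (fun x : ℝ => (c₁/α + x)/u) (nhds 0) (nhds (c₁/α/u)) := by
      have hc : Continuous (fun x : ℝ => (c₁/α + x)/u) := by continuity
      simpa using hc.tendsto 0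
    exact h1.tendsto.comp h2
  rw [Metric.tendsto_nhdsWithin_nhds]
  intro ε hε
  obtain ⟨δ', hδ'pos, hδ'⟩ := Metric.eventually_nhds_iff.mp (Metric.tendsto_nhds.mp hgcont ε hε)
  set η := min (δ'/2) (c₁/α/2) with hηdef
  have hη : 0 < η := lt_min (by linarith) (by positivity)
  have hηA : η < c₁/α := lt_of_le_of_lt (min_le_right _ _) (by linarith)
  have hηδ' : ∀ x : ℝ, |x| ≤ η → dist (((c₁/α + x)/u) ^ (1/α)) ((α * u / c₁) ^ (-(1 / α))) < ε := by
    intro x hx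
    apply hδ'
    rw [Real.dist_eq, sub_zero]
    exact lt_of_le_of_lt hx (lt_of_le_of_lt (min_le_left _ _) (by linarith))
  have hgη := hηδ' η (by rw [abs_of_pos hη])
  have hgmη := hηδ' (-η) (by rw [abs_neg, abs_of_pos hη])
  rw [Real.dist_eq] at hgη hgmη
  -- two-sided tail bound at level η/2
  obtain ⟨δ₁, hδ₁pos, hδ₁⟩ := tail_two_sided α c₁ hα hc₁ q hq_pos hq_int hq_lim (η/2)
    (by linarith) (by linarith)
  have hδ₁α : 0 < δ₁ ^ α := Real.rpow_pos_of_pos hδ₁pos _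
  refine ⟨δ₁ ^ α * u / (c₁/α + η), by positivity, fun h hh hdist => ?_⟩
  rw [mem_Ioi] at hh
  rw [Real.dist_eq, sub_zero, abs_of_pos hh] at hdist
  have hPη : 0 < c₁/α - η := sub_pos.mpr hηA
  -- the two comparison points
  set xU := ((c₁/α + η)/u * h) ^ (1/α) with hxUdef
  set xL := ((c₁/α - η)/u * h) ^ (1/α) with hxLdef
  have htU : 0 < (c₁/α + η)/u * h := by positivity
  have htL : 0 < (c₁/α - η)/u * h := by positivity
  have hxUpos : 0 < xU := Real.rpow_pos_of_pos htU _
  have hxLpos : 0 < xL := Real.rpow_pos_of_pos htL _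
  have hexp : (1/α) * (-α) = -1 := by
    rw [mul_neg, one_div_mul_cancel hα.ne']
  have hinv_val : ∀ a : ℝ, 0 < a → ((a/u*h) ^ (1/α)) ^ (-α) = u / (a * h) := by
    intro a ha
    rw [← Real.rpow_mul (by positivity), hexp, Real.rpow_neg_one,
      show a/u*h = a*h/u from by ring, inv_div]
  have hxUinv : xU ^ (-α) = u / ((c₁/α + η) * h) := hinv_val _ (by positivity)
  have hxLinv : xL ^ (-α) = u / ((c₁/α - η) * h) := hinv_val _ hPη
  -- xU ≤ δ₁
  have hxUδ₁ : xU ≤ δ₁ := by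
    have harg : (c₁/α + η)/u * h ≤ δ₁ ^ α := by
      rw [div_mul_eq_mul_div, div_le_iff₀ hu]
      have h8 := hdist
      rw [lt_div_iff₀ (by positivity)] at h8
      nlinarith
    calc xU ≤ (δ₁ ^ α) ^ (1/α) := Real.rpow_le_rpow htU.le harg (by positivity)
      _ = δ₁ := by
        rw [← Real.rpow_mul hδ₁pos.le, mul_one_div, div_self hα.ne', Real.rpow_one]
  have hxLxU : xL ≤ xU := by
    refine Real.rpow_le_rpow htL.le ?_ (by positivity)
    have h10 : (0:ℝ) ≤ η * (h / u) := mul_nonneg hη.le (div_pos hh hu).le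
    have h11 : (c₁/α + η)/u*h - (c₁/α - η)/u*h = 2 * (η * (h/u)) := by ring
    linarith
  -- xU belongs to the set
  have hQxU : (∫ s in Ioi xU, q s) < u / h := by
    refine lt_of_le_of_lt ((hδ₁ xU hxUpos hxUδ₁).2) ?_
    rw [hxUinv]
    have hpos3 : (0:ℝ) < (c₁/α + η) * h := by positivity
    rw [mul_div_assoc', div_lt_div_iff₀ hpos3 hh]
    have h12 : (0:ℝ) < η * (u * h) := by positivity
    have h13 : u * ((c₁/α + η) * h) - (c₁/α + η/2) * u * h = (η * (u*h)) / 2 := by ring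
    linarith
  have hSne : {r : ℝ | 0 < r ∧ (∫ s in Ioi r, q s) < u / h}.Nonempty := ⟨xU, hxUpos, hQxU⟩
  have hSbdd : BddBelow {r : ℝ | 0 < r ∧ (∫ s in Ioi r, q s) < u / h} :=
    ⟨0, fun r hr => hr.1.le⟩
  have hinf_le : sInf {r : ℝ | 0 < r ∧ (∫ s in Ioi r, q s) < u / h} ≤ xU :=
    csInf_le hSbdd ⟨hxUpos, hQxU⟩
  have hle_inf : xL ≤ sInf {r : ℝ | 0 < r ∧ (∫ s in Ioi r, q s) < u / h} := by
    refine le_csInf hSne (fun r hr => ?_)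
    by_contra hlt
    push_neg at hlt
    have hrδ₁ : r ≤ δ₁ := (hlt.trans_le (hxLxU.trans hxUδ₁)).le
    have hb := (hδ₁ r hr.1 hrδ₁).1
    have hmono : xL ^ (-α) < r ^ (-α) :=
      Real.rpow_lt_rpow_of_neg hr.1 hlt (by linarith)
    have hcontra : u / h < (c₁/α - η/2) * r ^ (-α) := by
      have hpos2 : (0:ℝ) < (c₁/α - η) * h := mul_pos hPη hh
      have h9 : u / h ≤ (c₁/α - η/2) * xL ^ (-α) := by
        rw [hxLinv, mul_div_assoc', div_le_div_iff₀ hh hpos2]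
        have h12 : (0:ℝ) ≤ η * (u * h) := by positivity
        have h13 : (c₁/α - η/2) * u * h - u * ((c₁/α - η) * h) = (η * (u*h)) / 2 := by ring
        linarith
      have h14 : (c₁/α - η/2) * xL ^ (-α) < (c₁/α - η/2) * r ^ (-α) :=
        mul_lt_mul_of_pos_left hmono (by linarith)
      exact lt_of_le_of_lt h9 h14
    have := hr.2
    linarith
  -- convert to the scaled quantities
  have hhp : 0 < h ^ (-(1/α)) := Real.rpow_pos_of_pos hh _
  have hval : ∀ a : ℝ, 0 ≤ a → h ^ (-(1/α)) * ((a/u * h) ^ (1/α)) = (a/u) ^ (1/α) := by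
    intro a ha
    rw [Real.mul_rpow (by positivity) hh.le, ← mul_assoc, mul_comm (h ^ (-(1/α))),
      mul_assoc, ← Real.rpow_add hh, neg_add_cancel, Real.rpow_zero, mul_one]
  have hxUval : h ^ (-(1/α)) * xU = ((c₁/α + η)/u) ^ (1/α) := hval _ (by positivity)
  have hxLval : h ^ (-(1/α)) * xL = ((c₁/α - η)/u) ^ (1/α) := hval _ hPη.le
  have hup : h ^ (-(1/α)) * sInf {r : ℝ | 0 < r ∧ (∫ s in Ioi r, q s) < u / h}
      ≤ ((c₁/α + η)/u) ^ (1/α) := by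
    rw [← hxUval]
    exact mul_le_mul_of_nonneg_left hinf_le hhp.le
  have hlo : ((c₁/α - η)/u) ^ (1/α)
      ≤ h ^ (-(1/α)) * sInf {r : ℝ | 0 < r ∧ (∫ s in Ioi r, q s) < u / h} := by
    rw [← hxLval]
    exact mul_le_mul_of_nonneg_left hle_inf hhp.le
  rw [Real.dist_eq, abs_lt]
  have e2 : ((c₁/α - η)/u) ^ (1/α) = ((c₁/α + -η)/u) ^ (1/α) := by ring_nf
  rw [abs_lt] at hgη hgmη
  constructor
  · have := hlo
    rw [e2] at this
    linarith [hgmη.1]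
  · linarith [hgη.2, hup]
end
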